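/- arXiv:math/0503277 — 6 statements merged into one kernel-verified Lean document; each statement's English description precedes it below -/
import Mathlib

section
/- A point y = (y_1,…,y_n) ∈ (ℂ^×)^n satisfies Π_{i=1}^n y_i^{f(v_i)} = 1 for every f ∈ Hom(ℤ^d, ℤ) and Π_{i∈I}(1 − y_i) = 0 for every subset I ⊆ Fin n with I ∉ 𝒮, if and only if y = y(v) for some v ∈ Box(Σ); moreover the assignment v ↦ y(v) is injective on Box(Σ). -/
open scoped TensorProduct

noncomputable section

namespace ToricStack

/-- The real vector corresponding to an integral lattice point. -/
def toR {d : ℕ} (w : Fin d → ℤ) : Fin d → ℝ := fun j => (w j : ℝ)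

/-- The rational vector corresponding to an integral lattice point. -/
def toQ {d : ℕ} (w : Fin d → ℤ) : Fin d → ℚ := fun j => (w j : ℚ)

/-- cone(S) = nonnegative real span of the `v i`, `i ∈ S`. -/
def cone {d n : ℕ} (v : Fin n → Fin d → ℤ) (S : Finset (Fin n)) : Set (Fin d → ℝ) :=
  {x | ∃ a : Fin n → ℝ, (∀ i, 0 ≤ a i) ∧ (∀ i ∉ S, a i = 0) ∧ x = ∑ i, a i • toR (v i)}

/-- Axioms for the combinatorial data `(v, 𝒮)` encoding a simplicial fan in `ℤ^d` together with
a chosen lattice point on each ray (a reduced stacky fan): `𝒮` contains the empty set and all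
singletons, is downward closed, and each `S ∈ 𝒮` indexes an `ℝ`-linearly independent family;
moreover cones intersect along common faces. -/
def IsStackyFan {d n : ℕ} (v : Fin n → Fin d → ℤ) (𝒮 : Finset (Finset (Fin n))) : Prop :=
  (∀ i, v i ≠ 0) ∧
  (∅ ∈ 𝒮) ∧
  (∀ i, ({i} : Finset (Fin n)) ∈ 𝒮) ∧
  (∀ S ∈ 𝒮, ∀ S' ⊆ S, S' ∈ 𝒮) ∧
  (∀ S ∈ 𝒮, LinearIndependent ℝ (fun i : {i // i ∈ S} => toR (v i))) ∧
  (∀ S ∈ 𝒮, ∀ S' ∈ 𝒮, cone v S ∩ cone v S' = cone v (S ∩ S'))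

/-- Lattice points of the support `|Σ|` of the fan. -/
def suppL {d n : ℕ} (v : Fin n → Fin d → ℤ) (𝒮 : Finset (Finset (Fin n))) :
    Set (Fin d → ℤ) :=
  {w | ∃ S ∈ 𝒮, toR w ∈ cone v S}

/-- Nondegeneracy: the `v i` span `ℚ^d` over `ℚ`. -/
def Nondegenerate {d n : ℕ} (v : Fin n → Fin d → ℤ) : Prop :=
  Submodule.span ℚ (Set.range fun i => toQ (v i)) = ⊤

/-- `w = ∑_{i∈S} α_i v_i` with rational `α_i ∈ [0,1)` supported on `S ∈ 𝒮`,
i.e. a witness that `w ∈ Box(S)`. -/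
def IsBoxRep {d n : ℕ} (v : Fin n → Fin d → ℤ) (𝒮 : Finset (Finset (Fin n)))
    (w : Fin d → ℤ) (S : Finset (Fin n)) (α : Fin n → ℚ) : Prop :=
  S ∈ 𝒮 ∧ (∀ i, 0 ≤ α i ∧ α i < 1) ∧ (∀ i ∉ S, α i = 0) ∧
  (∀ j, (w j : ℚ) = ∑ i, α i * (v i j : ℚ))

/-- `Box(Σ) = ⋃_{S ∈ 𝒮} Box(S)`. -/
def Box {d n : ℕ} (v : Fin n → Fin d → ℤ) (𝒮 : Finset (Finset (Fin n))) :
    Set (Fin d → ℤ) :=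
  {w | ∃ S α, IsBoxRep v 𝒮 w S α}

/-- `S` is (the index set of) the minimal cone of `Σ` containing `w`. -/
def IsMinimalCone {d n : ℕ} (v : Fin n → Fin d → ℤ) (𝒮 : Finset (Finset (Fin n)))
    (w : Fin d → ℤ) (S : Finset (Fin n)) : Prop :=
  S ∈ 𝒮 ∧ toR w ∈ cone v S ∧ ∀ S' ∈ 𝒮, toR w ∈ cone v S' → S ⊆ S'

/-- The point `y(v) ∈ (ℂ^×)^n`: `y(v)_i = exp(2π√-1·α_i)` (which is `1` off the support
of `α`). -/
def yOf {n : ℕ} (α : Fin n → ℚ) : Fin n → ℂ :=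
  fun i => Complex.exp (2 * Real.pi * Complex.I * (α i : ℂ))

/-- The Laurent polynomial ring `ℤ[x_1^{±1},…,x_n^{±1}]`, as the group algebra of `ℤ^n`. -/
abbrev Laur (n : ℕ) := AddMonoidAlgebra ℤ (Fin n →₀ ℤ)

/-- The Laurent variable `x_i`. -/
def lX {n : ℕ} (i : Fin n) : Laur n := AddMonoidAlgebra.single (Finsupp.single i 1) 1

/-- The Laurent monomial `∏_i x_i^{e i}`. -/
def lMon {n : ℕ} (e : Fin n → ℤ) : Laur n :=
  AddMonoidAlgebra.single (Finsupp.equivFunOnFinite.symm e) 1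

/-- The defining relations of the ring `B`: `∏_i x_i^{f(v_i)} − 1` for all linear
`f : ℤ^d → ℤ`, and `∏_{i∈I} (1 − x_i)` for all `I ∉ 𝒮`. -/
def Brels {d n : ℕ} (v : Fin n → Fin d → ℤ) (𝒮 : Finset (Finset (Fin n))) : Set (Laur n) :=
  {x | ∃ f : (Fin d → ℤ) →ₗ[ℤ] ℤ, x = lMon (fun i => f (v i)) - 1} ∪
  {x | ∃ I : Finset (Fin n), I ∉ 𝒮 ∧ x = ∏ i ∈ I, (1 - lX i)}

/-- The ring `B`. -/
abbrev Bring {d n : ℕ} (v : Fin n → Fin d → ℤ) (𝒮 : Finset (Finset (Fin n))) :=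
  Laur n ⧸ Ideal.span (Brels v 𝒮)

/-- `B_ℂ = B ⊗_ℤ ℂ`. -/
abbrev Bc {d n : ℕ} (v : Fin n → Fin d → ℤ) (𝒮 : Finset (Finset (Fin n))) :=
  ℂ ⊗[ℤ] Bring v 𝒮

/-- The class of `x_i` in `B_ℂ`. -/
def xcl {d n : ℕ} (v : Fin n → Fin d → ℤ) (𝒮 : Finset (Finset (Fin n))) (i : Fin n) :
    Bc v 𝒮 :=
  (1 : ℂ) ⊗ₜ[ℤ] (Ideal.Quotient.mk (Ideal.span (Brels v 𝒮)) (lX i))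

/-- The data of the partial semigroup ring `ℂ[N,Σ]`: a commutative `ℂ`-algebra `A`
with basis `[w]` indexed by the lattice points `w` of `|Σ|`, unit `[0]`, and
multiplication `[w₁]·[w₂] = [w₁+w₂]` if `w₁, w₂` lie in a common cone and `0` otherwise. -/
structure PSRData {d n : ℕ} (v : Fin n → Fin d → ℤ) (𝒮 : Finset (Finset (Fin n)))
    (A : Type) [CommRing A] [Algebra ℂ A] where
  e : (Fin d → ℤ) → A
  indep : LinearIndependent ℂ (fun w : suppL v 𝒮 => e w)
  spans : Submodule.span ℂ (e '' suppL v 𝒮) = ⊤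
  one : e 0 = 1
  mul_of_cone : ∀ w₁ ∈ suppL v 𝒮, ∀ w₂ ∈ suppL v 𝒮,
      (∃ S ∈ 𝒮, toR w₁ ∈ cone v S ∧ toR w₂ ∈ cone v S) → e w₁ * e w₂ = e (w₁ + w₂)
  mul_of_not_cone : ∀ w₁ ∈ suppL v 𝒮, ∀ w₂ ∈ suppL v 𝒮,
      (¬ ∃ S ∈ 𝒮, toR w₁ ∈ cone v S ∧ toR w₂ ∈ cone v S) → e w₁ * e w₂ = 0

/-- The ideal `⟨t_1,…,t_d⟩ ⊆ ℂ[N,Σ]`, where `t_j = ∑_i f_j(v_i)·[v_i]` for the coordinate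
functions `f_j`. -/
def tIdeal {d n : ℕ} (v : Fin n → Fin d → ℤ) {A : Type} [CommRing A] [Algebra ℂ A]
    (e : (Fin d → ℤ) → A) : Ideal A :=
  Ideal.span (Set.range fun j : Fin d => ∑ i, ((v i j : ℂ)) • e (v i))

/-- The SR-cohomology ring `H_SR = ℂ[N,Σ]/⟨t_1,…,t_d⟩`. -/
abbrev HSR {d n : ℕ} (v : Fin n → Fin d → ℤ) (A : Type) [CommRing A] [Algebra ℂ A]
    (e : (Fin d → ℤ) → A) := A ⧸ tIdeal v e

/-- The index set `L_v` of rays `j` in the link of the cone `S_v`. -/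
abbrev LinkIdx {n : ℕ} (𝒮 : Finset (Finset (Fin n))) (Sv : Finset (Fin n)) : Type :=
  {j : Fin n // j ∉ Sv ∧ insert j Sv ∈ 𝒮}

/-- The defining relations of the ring `P_v`: monomials `∏_{j∈J} z_j` for `J ⊆ L_v` with
`S_v ∪ J ∉ 𝒮`, and linear forms `∑_{j∈L_v} f(v_j) z_j` for `ℚ`-linear `f` vanishing
on the `v_i`, `i ∈ S_v`. -/
def Prels {d n : ℕ} (v : Fin n → Fin d → ℤ) (𝒮 : Finset (Finset (Fin n)))
    (Sv : Finset (Fin n)) : Set (MvPolynomial (LinkIdx 𝒮 Sv) ℂ) :=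
  {p | ∃ J : Finset (LinkIdx 𝒮 Sv), (Sv ∪ J.image Subtype.val) ∉ 𝒮 ∧
        p = ∏ j ∈ J, MvPolynomial.X j} ∪
  {p | ∃ f : (Fin d → ℚ) →ₗ[ℚ] ℚ, (∀ i ∈ Sv, f (toQ (v i)) = 0) ∧
        p = ∑ j : LinkIdx 𝒮 Sv, MvPolynomial.C ((f (toQ (v (j : Fin n))) : ℂ)) * MvPolynomial.X j}

/-- The ring `P_v` (the Stanley–Reisner presentation of the cohomology of the closed toric
subvariety corresponding to the minimal cone containing `v`). -/
abbrev Pring {d n : ℕ} (v : Fin n → Fin d → ℤ) (𝒮 : Finset (Finset (Fin n)))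
    (Sv : Finset (Fin n)) := MvPolynomial (LinkIdx 𝒮 Sv) ℂ ⧸ Ideal.span (Prels v 𝒮 Sv)

end ToricStack

/-! For a solution `y`, let `T = {i | y i ≠ 1}`; then `T ∈ 𝒮`, since otherwise
`∏_{i ∈ T} (1 - y i) = 0` would force some `y i = 1` with `i ∈ T`. Writing `y i = exp (2πi c i)`,
the relations for the coordinate functionals say that `∑ c i • v i` is a lattice point. As
`(v i)_{i ∈ T}` is linearly independent, the `c i` are real and even rational, and replacing them
by their fractional parts yields a box point whose coefficients are nonzero exactly on `T`, so
that `T` is its minimal cone. Conversely, for a box point `w = ∑ α i • v i` one has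
`∏ y i ^ f (v i) = exp (2πi f w) = 1`, and `y i = 1` off the cone of `w`. Injectivity holds
because `α i ∈ [0, 1)` is determined by `exp (2πi α i)`. -/

theorem LinearIndepOn.eq_of_sum_smul_eq {K M ι : Type*} [Ring K] [AddCommGroup M] [Module K M]
    [Fintype ι] {b : ι → M} {S : Finset ι} (hS : LinearIndepOn K b (S : Set ι)) {c c' : ι → K}
    (hc : ∀ i ∉ S, c i = 0) (hc' : ∀ i ∉ S, c' i = 0)
    (h : ∑ i, c i • b i = ∑ i, c' i • b i) : c = c' := by
  have hsum : ∑ i ∈ S, (c - c') i • b i = 0 := by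
    rw [Finset.sum_subset (Finset.subset_univ S) fun i _ hi => by simp [hc i hi, hc' i hi]]
    simp [sub_smul, Finset.sum_sub_distrib, h]
  funext i
  by_cases hi : i ∈ S
  · exact sub_eq_zero.mp (linearIndepOn_iff'.mp hS S _ subset_rfl hsum i hi)
  · rw [hc i hi, hc' i hi]

namespace ToricStack

open Finset

section

variable {d n : ℕ}

/-- Apply a `ℚ`-linear retraction `ℝ → ℚ` to the coefficients and use uniqueness of
coordinates. -/
theorem exists_rat_eq_of_sum_smul_eq {ι : Type*} [Fintype ι] {b : ι → Fin d → ℤ} {S : Finset ι}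
    (hS : LinearIndepOn ℝ (fun i => toR (b i)) (S : Set ι)) {c : ι → ℝ} (hc : ∀ i ∉ S, c i = 0)
    {m : Fin d → ℤ} (h : ∑ i, c i • toR (b i) = toR m) : ∃ q : ι → ℚ, c = fun i => (q i : ℝ) := by
  obtain ⟨φ, hφ⟩ := (Algebra.linearMap ℚ ℝ).exists_leftInverse_of_injective
    (LinearMap.ker_eq_bot.mpr (algebraMap ℚ ℝ).injective)
  have hφ_cast (r : ℚ) : φ r = r := LinearMap.congr_fun hφ r
  refine ⟨fun i => φ (c i), hS.eq_of_sum_smul_eq hc (fun i hi => by simp [hc i hi]) ?_⟩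
  rw [h]
  funext j
  have hj : ∑ i, (b i j : ℚ) * φ (c i) = m j := by
    have := congrArg φ (congrFun h j)
    simp only [Finset.sum_apply, Pi.smul_apply, toR, smul_eq_mul, mul_comm (c _),
      ← zsmul_eq_mul, map_sum, map_zsmul] at this
    rw [← Rat.cast_intCast (m j), hφ_cast] at this
    simpa only [zsmul_eq_mul] using this
  simp only [toR, Finset.sum_apply, Pi.smul_apply, smul_eq_mul, mul_comm (φ _ : ℝ)]
  exact_mod_cast hj.symm

theorem yOf_fract (q : Fin n → ℚ) : yOf (fun i => Int.fract (q i)) = yOf q := by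
  funext i
  simp only [yOf, Int.fract, Rat.cast_sub, Rat.cast_intCast, mul_sub, Complex.exp_sub,
    mul_comm _ ((⌊q i⌋ : ℤ) : ℂ), Complex.exp_int_mul_two_pi_mul_I, div_one]

theorem eq_of_yOf_eq {α α' : Fin n → ℚ} (hα : ∀ i, 0 ≤ α i ∧ α i < 1)
    (hα' : ∀ i, 0 ≤ α' i ∧ α' i < 1) (h : yOf α = yOf α') : α = α' := by
  funext i
  obtain ⟨k, hk⟩ := Complex.exp_eq_exp_iff_exists_int.mp (congrFun h i)
  have hdiff : α i - α' i = k := by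
    have h2πI : (2 * Real.pi * Complex.I : ℂ) ≠ 0 := by simp [Real.pi_ne_zero]
    have hc : (α i - α' i : ℂ) = k := mul_left_cancel₀ h2πI (by linear_combination hk)
    exact_mod_cast hc
  rw [← Int.fract_eq_self.mpr (hα i), ← Int.fract_eq_self.mpr (hα' i)]
  exact Int.fract_eq_fract.mpr ⟨k, hdiff⟩

theorem cast_apply_eq_sum_mul {ι : Type*} [Fintype ι] (f : (Fin d → ℤ) →ₗ[ℤ] ℤ)
    {b : ι → Fin d → ℤ} {w : Fin d → ℤ} {α : ι → ℚ} (h : ∀ j, (w j : ℚ) = ∑ i, α i * b i j) :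
    (f w : ℚ) = ∑ i, α i * f (b i) := by
  rw [LinearMap.pi_apply_eq_sum_univ f w]
  simp only [LinearMap.pi_apply_eq_sum_univ f (b _), smul_eq_mul, Int.cast_sum, Int.cast_mul, h,
    sum_mul, mul_sum]
  rw [sum_comm]
  exact sum_congr rfl fun i _ => sum_congr rfl fun j _ => by ring

section BoxRep

variable {v : Fin n → Fin d → ℤ} {𝒮 : Finset (Finset (Fin n))} {w : Fin d → ℤ}
  {S : Finset (Fin n)} {α : Fin n → ℚ}

theorem IsBoxRep.prod_yOf_pow_eq_one (hrep : IsBoxRep v 𝒮 w S α) (f : (Fin d → ℤ) →ₗ[ℤ] ℤ) :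
    ∏ i, yOf α i ^ f (v i) = 1 := by
  have hfw : ((f w : ℚ) : ℂ) = ∑ i, (α i : ℂ) * f (v i) := by
    rw [cast_apply_eq_sum_mul f hrep.2.2.2]
    push_cast
    rfl
  simp only [yOf, ← Complex.exp_int_mul, ← Complex.exp_sum]
  rw [← Complex.exp_int_mul_two_pi_mul_I (f w)]
  congr 1
  push_cast at hfw
  rw [hfw, sum_mul]
  exact sum_congr rfl fun i _ => by ring

theorem IsBoxRep.prod_one_sub_yOf_eq_zero (hdown : ∀ S ∈ 𝒮, ∀ S' ⊆ S, S' ∈ 𝒮)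
    (hrep : IsBoxRep v 𝒮 w S α) {I : Finset (Fin n)} (hI : I ∉ 𝒮) :
    ∏ i ∈ I, (1 - yOf α i) = 0 := by
  obtain ⟨i, hiI, hiS⟩ := not_subset.mp fun hIS => hI (hdown S hrep.1 I hIS)
  exact prod_eq_zero hiI (by simp [yOf, hrep.2.2.1 i hiS])

theorem IsBoxRep.toR_eq (hrep : IsBoxRep v 𝒮 w S α) :
    toR w = ∑ i, (α i : ℝ) • toR (v i) := by
  funext j
  simp only [toR, Finset.sum_apply, Pi.smul_apply, smul_eq_mul]
  exact_mod_cast hrep.2.2.2 j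

theorem IsBoxRep.mem_cone (hrep : IsBoxRep v 𝒮 w S α) : toR w ∈ cone v S :=
  ⟨fun i => α i, fun i => show (0 : ℝ) ≤ α i by exact_mod_cast (hrep.2.1 i).1,
    fun i hi => by simp [hrep.2.2.1 i hi], hrep.toR_eq⟩

theorem IsBoxRep.isMinimalCone (hrep : IsBoxRep v 𝒮 w S α)
    (hS : LinearIndepOn ℝ (fun i => toR (v i)) (S : Set (Fin n)))
    (hglue : ∀ S' ∈ 𝒮, cone v S ∩ cone v S' = cone v (S ∩ S')) (hpos : ∀ i ∈ S, α i ≠ 0) :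
    IsMinimalCone v 𝒮 w S := by
  refine ⟨hrep.1, hrep.mem_cone, fun S' hS' hwS' => ?_⟩
  obtain ⟨a, -, ha, hwa⟩ : toR w ∈ cone v (S ∩ S') := hglue S' hS' ▸ ⟨hrep.mem_cone, hwS'⟩
  have hαa : (fun i => (α i : ℝ)) = a :=
    hS.eq_of_sum_smul_eq (fun i hi => by simp [hrep.2.2.1 i hi])
      (fun i hi => ha i fun hi' => hi (mem_inter.mp hi').1) (hrep.toR_eq ▸ hwa)
  intro i hiS
  by_contra hiS'
  have := congrFun hαa i
  rw [ha i fun hi' => hiS' (mem_inter.mp hi').2] at this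
  exact hpos i hiS (by exact_mod_cast this)

end BoxRep

theorem exists_rat_yOf_eq_of_prod_pow_eq_one {v : Fin n → Fin d → ℤ} {T : Finset (Fin n)}
    (hT : LinearIndepOn ℝ (fun i => toR (v i)) (T : Set (Fin n))) {y : Fin n → ℂ}
    (hy0 : ∀ i, y i ≠ 0) (hyT : ∀ i ∉ T, y i = 1) (hy : ∀ j, ∏ i, y i ^ v i j = 1) :
    ∃ (q : Fin n → ℚ) (m : Fin d → ℤ),
      (∀ i ∉ T, q i = 0) ∧ (∀ j, (m j : ℚ) = ∑ i, q i * v i j) ∧ y = yOf q := by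
  set c : Fin n → ℂ := fun i => Complex.log (y i) / (2 * Real.pi * Complex.I)
  have h2πI : (2 * Real.pi * Complex.I : ℂ) ≠ 0 := by simp [Real.pi_ne_zero]
  have hyc (i : Fin n) : y i = Complex.exp (2 * Real.pi * Complex.I * c i) := by
    rw [mul_div_cancel₀ _ h2πI, Complex.exp_log (hy0 i)]
  have hcT (i : Fin n) (hi : i ∉ T) : c i = 0 := by simp [c, hyT i hi]
  have hm (j : Fin d) : ∃ m : ℤ, ∑ i, c i * v i j = m := by
    have hexp : Complex.exp (∑ i, v i j * Complex.log (y i)) = 1 := by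
      rw [Complex.exp_sum]
      simpa only [Complex.exp_int_mul, Complex.exp_log (hy0 _)] using hy j
    obtain ⟨m, hm⟩ := Complex.exp_eq_one_iff.mp hexp
    refine ⟨m, ?_⟩
    calc ∑ i, c i * v i j = (∑ i, v i j * Complex.log (y i)) / (2 * Real.pi * Complex.I) := by
          rw [sum_div]
          exact sum_congr rfl fun i _ => by ring
      _ = m := by rw [hm, mul_div_cancel_right₀ _ h2πI]
  choose m hm using hm
  have hcomp (j : Fin d) : ∑ i, (c i).re * v i j = m j ∧ ∑ i, (c i).im * v i j = 0 := by
    have := congrArg (fun z : ℂ => (z.re, z.im)) (hm j)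
    simpa [Complex.re_sum, Complex.im_sum] using this
  have him : (fun i => (c i).im) = 0 := by
    refine hT.eq_of_sum_smul_eq (fun i hi => by simp [hcT i hi]) (fun _ _ => rfl) ?_
    funext j
    simpa [toR, Finset.sum_apply] using (hcomp j).2
  obtain ⟨q, hq⟩ := exists_rat_eq_of_sum_smul_eq hT (c := fun i => (c i).re)
    (fun i hi => by simp [hcT i hi]) (m := m) <| by
      funext j
      simpa [toR, Finset.sum_apply] using (hcomp j).1
  have hcq (i : Fin n) : c i = q i :=
    Complex.ext (by simpa using congrFun hq i) (by simpa using congrFun him i)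
  refine ⟨q, m, fun i hi => ?_, fun j => ?_, funext fun i => by rw [hyc, hcq]; rfl⟩
  · exact_mod_cast (hcq i).symm.trans (hcT i hi)
  · have := hm j
    simp only [hcq] at this
    exact_mod_cast this.symm

theorem isBoxRep_fract {v : Fin n → Fin d → ℤ} {𝒮 : Finset (Finset (Fin n))}
    {S : Finset (Fin n)} (hS : S ∈ 𝒮) {q : Fin n → ℚ} (hq : ∀ i ∉ S, q i = 0)
    {m : Fin d → ℤ} (hm : ∀ j, (m j : ℚ) = ∑ i, q i * v i j) :
    IsBoxRep v 𝒮 (fun j => m j - ∑ i, ⌊q i⌋ * v i j) S (fun i => Int.fract (q i)) :=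
  ⟨hS, fun i => ⟨Int.fract_nonneg _, Int.fract_lt_one _⟩, fun i hi => by simp [hq i hi],
    fun j => by
      simp only [Int.cast_sub, Int.cast_sum, Int.cast_mul, hm, Int.fract, sub_mul,
        sum_sub_distrib]⟩

end

theorem solutions_are_box_points_general
    (d n : ℕ)
    (v : Fin n → Fin d → ℤ) (𝒮 : Finset (Finset (Fin n)))
    (hfan : IsStackyFan v 𝒮) :
    (∀ y : Fin n → ℂ, (∀ i, y i ≠ 0) →
      (((∀ f : (Fin d → ℤ) →ₗ[ℤ] ℤ, ∏ i, y i ^ f (v i) = 1) ∧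
        (∀ I : Finset (Fin n), I ∉ 𝒮 → ∏ i ∈ I, (1 - y i) = 0)) ↔
       (∃ (w : Fin d → ℤ) (S : Finset (Fin n)) (α : Fin n → ℚ),
          IsBoxRep v 𝒮 w S α ∧ IsMinimalCone v 𝒮 w S ∧ y = yOf α))) ∧
    (∀ (w w' : Fin d → ℤ) (S S' : Finset (Fin n)) (α α' : Fin n → ℚ),
      IsBoxRep v 𝒮 w S α → IsMinimalCone v 𝒮 w S →
      IsBoxRep v 𝒮 w' S' α' → IsMinimalCone v 𝒮 w' S' →
      yOf α = yOf α' → w = w') := by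
  classical
  obtain ⟨-, -, -, hdown, hindep, hglue⟩ := hfan
  refine ⟨fun y hy0 => ⟨?_, ?_⟩, ?_⟩
  · rintro ⟨hunit, hnonface⟩
    set T := univ.filter fun i => y i ≠ 1
    have hT : T ∈ 𝒮 := by
      by_contra hT
      obtain ⟨i, hi, hyi⟩ := prod_eq_zero_iff.mp (hnonface T hT)
      exact (mem_filter.mp hi).2 (sub_eq_zero.mp hyi).symm
    obtain ⟨q, m, hqT, hm, rfl⟩ := exists_rat_yOf_eq_of_prod_pow_eq_one (hindep T hT) hy0
      (fun i hi => by simpa [T] using hi) fun j => hunit (LinearMap.proj j)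
    have hrep := isBoxRep_fract hT hqT hm
    refine ⟨_, T, _, hrep, hrep.isMinimalCone (hindep T hT) (hglue T hT) fun i hi h0 => ?_,
      (yOf_fract q).symm⟩
    exact (mem_filter.mp hi).2 (by rw [← yOf_fract]; simp [yOf, h0])
  · rintro ⟨w, S, α, hrep, -, rfl⟩
    exact ⟨hrep.prod_yOf_pow_eq_one, fun I hI => hrep.prod_one_sub_yOf_eq_zero hdown hI⟩
  · intro w w' S S' α α' hrep _ hrep' _ h
    obtain rfl := eq_of_yOf_eq hrep.2.1 hrep'.2.1 h
    funext j
    exact_mod_cast (hrep.2.2.2 j).trans (hrep'.2.2.2 j).symm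

/-- A point `y ∈ (ℂ^×)^n` satisfies `∏_i y_i^{f(v_i)} = 1` for every linear `f : ℤ^d → ℤ` and
`∏_{i∈I}(1 − y_i) = 0` for every `I ∉ 𝒮`, if and only if `y = y(v)` for some `v ∈ Box(Σ)`
(written via its representation over the minimal cone containing it); moreover `v ↦ y(v)` is
injective on `Box(Σ)`. -/
theorem solutions_are_box_points
    (d n : ℕ) (hd : 0 < d) (hn : 0 < n)
    (v : Fin n → Fin d → ℤ) (𝒮 : Finset (Finset (Fin n)))
    (hfan : IsStackyFan v 𝒮) (hnd : Nondegenerate v) :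
    (∀ y : Fin n → ℂ, (∀ i, y i ≠ 0) →
      (((∀ f : (Fin d → ℤ) →ₗ[ℤ] ℤ, ∏ i, y i ^ f (v i) = 1) ∧
        (∀ I : Finset (Fin n), I ∉ 𝒮 → ∏ i ∈ I, (1 - y i) = 0)) ↔
       (∃ (w : Fin d → ℤ) (S : Finset (Fin n)) (α : Fin n → ℚ),
          IsBoxRep v 𝒮 w S α ∧ IsMinimalCone v 𝒮 w S ∧ y = yOf α))) ∧
    (∀ (w w' : Fin d → ℤ) (S S' : Finset (Fin n)) (α α' : Fin n → ℚ),
      IsBoxRep v 𝒮 w S α → IsMinimalCone v 𝒮 w S →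
      IsBoxRep v 𝒮 w' S' α' → IsMinimalCone v 𝒮 w' S' →
      yOf α = yOf α' → w = w') :=
  solutions_are_box_points_general d n v 𝒮 hfan

end ToricStack
end
end

section
/- Every ℂ-algebra homomorphism φ : ℂ[N,Σ] → ℂ with φ(t_j) = 0 for all j = 1,…,d satisfies φ([w]) = 0 for every nonzero w ∈ ℤ^d ∩ |Σ|. -/
open scoped TensorProduct

noncomputable section

namespace ToricStack

variable {d n : ℕ}

lemma toR_ne_zero {w : Fin d → ℤ} (h : w ≠ 0) : toR w ≠ 0 := by
  intro hc
  apply h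
  funext j
  have := congrFun hc j
  simpa [toR] using this

lemma toR_sum (v : Fin n → Fin d → ℤ) (T : Finset (Fin n)) :
    toR (∑ i ∈ T, v i) = ∑ i ∈ T, toR (v i) := by
  funext j
  simp [toR, Finset.sum_apply]

lemma mem_cone_single (v : Fin n → Fin d → ℤ) {S : Finset (Fin n)} {i : Fin n} (hi : i ∈ S) :
    toR (v i) ∈ cone v S := by
  refine ⟨fun k => if k = i then 1 else 0, ?_, ?_, ?_⟩
  · intro k; simp only []; split <;> norm_num
  · intro k hk; simp only [ite_eq_right_iff]; intro h; exact absurd (h ▸ hi) hk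
  · simp [ite_smul]

lemma sum_mem_cone (v : Fin n → Fin d → ℤ) (T : Finset (Fin n)) :
    toR (∑ i ∈ T, v i) ∈ cone v T := by
  refine ⟨fun k => if k ∈ T then 1 else 0, ?_, ?_, ?_⟩
  · intro k; simp only []; split <;> norm_num
  · intro k hk; simp [hk]
  · rw [toR_sum]
    simp only [ite_smul, one_smul, zero_smul]
    rw [Finset.sum_ite_mem, Finset.univ_inter]

lemma coeff_unique {v : Fin n → Fin d → ℤ} {T : Finset (Fin n)}
    (hindep : LinearIndependent ℝ (fun i : {i // i ∈ T} => toR (v i)))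
    {a b : Fin n → ℝ} (ha : ∀ i ∉ T, a i = 0) (hb : ∀ i ∉ T, b i = 0)
    (h : ∑ i, a i • toR (v i) = ∑ i, b i • toR (v i)) : a = b := by
  have key : ∑ i : {i // i ∈ T}, (a i - b i) • toR (v i) = 0 := by
    have h1 : ∑ i : {i // i ∈ T}, (a i.1 - b i.1) • toR (v i.1)
        = ∑ i ∈ T, (a i - b i) • toR (v i) := by
      rw [Finset.univ_eq_attach]
      exact Finset.sum_attach T (fun (i : Fin n) => (a i - b i) • toR (v i))
    rw [h1]
    have h2 : ∑ i ∈ T, (a i - b i) • toR (v i) = ∑ i, (a i - b i) • toR (v i) := by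
      apply Finset.sum_subset (Finset.subset_univ T)
      intro i _ hi
      rw [ha i hi, hb i hi]; simp
    rw [h2]
    have : ∑ i, (a i - b i) • toR (v i)
        = ∑ i, a i • toR (v i) - ∑ i, b i • toR (v i) := by
      rw [← Finset.sum_sub_distrib]
      congr 1; funext i; rw [sub_smul]
    rw [this, h, sub_self]
  have hz := (Fintype.linearIndependent_iff.mp hindep) (fun i => a i - b i) key
  funext i
  by_cases hi : i ∈ T
  · have := hz ⟨i, hi⟩
    simpa [sub_eq_zero] using this
  · rw [ha i hi, hb i hi]


lemma cone_nsmul {v : Fin n → Fin d → ℤ} {S : Finset (Fin n)} {w : Fin d → ℤ}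
    (hw : toR w ∈ cone v S) (k : ℕ) : toR (k • w) ∈ cone v S := by
  obtain ⟨a, ha0, hasupp, hx⟩ := hw
  refine ⟨fun i => (k : ℝ) * a i, fun i => ?_, fun i hi => ?_, ?_⟩
  · show 0 ≤ (k : ℝ) * a i
    have := ha0 i
    positivity
  case _ =>
    show (k : ℝ) * a i = 0
    rw [hasupp i hi, mul_zero]
  have htoR : toR (k • w) = (k : ℝ) • toR w := by
    funext j
    simp only [toR, Pi.smul_apply]
    simp only [nsmul_eq_mul, smul_eq_mul]
    push_cast
    ring
  rw [htoR, hx, Finset.smul_sum]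
  refine Finset.sum_congr rfl fun i _ => ?_
  rw [smul_smul]

lemma mem_of_single_mem_cone {v : Fin n → Fin d → ℤ} {𝒮 : Finset (Finset (Fin n))}
    (hfan : IsStackyFan v 𝒮) {S : Finset (Fin n)} (hS : S ∈ 𝒮)
    {i : Fin n} (hi : toR (v i) ∈ cone v S) : i ∈ S := by
  by_contra hiS
  have hsing := hfan.2.2.1 i
  have hint := hfan.2.2.2.2.2 {i} hsing S hS
  have hmem : toR (v i) ∈ cone v ({i} ∩ S) := by
    rw [← hint]; exact ⟨mem_cone_single v (Finset.mem_singleton_self i), hi⟩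
  have hempty : ({i} : Finset (Fin n)) ∩ S = ∅ := by
    ext k; simp only [Finset.mem_inter, Finset.mem_singleton, Finset.notMem_empty, iff_false]
    rintro ⟨rfl, hk⟩; exact hiS hk
  rw [hempty] at hmem
  obtain ⟨a, _, ha0, hx⟩ := hmem
  have hz : ∀ k, a k = 0 := fun k => ha0 k (Finset.notMem_empty k)
  apply toR_ne_zero (hfan.1 i)
  rw [hx]
  simp [hz]

lemma subset_of_sum_mem_cone {v : Fin n → Fin d → ℤ} {𝒮 : Finset (Finset (Fin n))}
    (hfan : IsStackyFan v 𝒮) {T S : Finset (Fin n)}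
    (hT : T ∈ 𝒮) (hS : S ∈ 𝒮) (h : toR (∑ i ∈ T, v i) ∈ cone v S) : T ⊆ S := by
  have hint := hfan.2.2.2.2.2 T hT S hS
  have hmem : toR (∑ i ∈ T, v i) ∈ cone v (T ∩ S) := by
    rw [← hint]; exact ⟨sum_mem_cone v T, h⟩
  obtain ⟨b, _, hbsupp, hx⟩ := hmem
  have hbT : ∀ i ∉ T, b i = 0 := fun i hi =>
    hbsupp i (fun hm => hi (Finset.mem_of_mem_inter_left hm))
  have hind : (fun k => if k ∈ T then (1:ℝ) else 0) = b := by
    apply coeff_unique (hfan.2.2.2.2.1 T hT) (fun i hi => by simp [hi]) hbT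
    rw [← hx]
    rw [toR_sum]
    simp only [ite_smul, one_smul, zero_smul]
    rw [Finset.sum_ite_mem, Finset.univ_inter]
  intro i hiT
  by_contra hiS
  have hb0 : b i = 0 := hbsupp i (fun hm => hiS (Finset.mem_of_mem_inter_right hm))
  have := congrFun hind i
  rw [hb0] at this
  simp [hiT] at this

variable {A : Type} [CommRing A] [Algebra ℂ A]

lemma e_pow {v : Fin n → Fin d → ℤ} {𝒮 : Finset (Finset (Fin n))}
    (D : PSRData v 𝒮 A) {S : Finset (Fin n)} (hS : S ∈ 𝒮)
    {w : Fin d → ℤ} (hw : toR w ∈ cone v S) :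
    ∀ m : ℕ, D.e w ^ (m + 1) = D.e ((m + 1) • w) := by
  intro m
  induction m with
  | zero => simp
  | succ k ih =>
    have hmem1 : ((k + 1) • w) ∈ suppL v 𝒮 := ⟨S, hS, cone_nsmul hw (k + 1)⟩
    have hmem2 : w ∈ suppL v 𝒮 := ⟨S, hS, hw⟩
    have hmul := D.mul_of_cone _ hmem1 _ hmem2 ⟨S, hS, cone_nsmul hw (k + 1), hw⟩
    calc D.e w ^ (k + 1 + 1) = D.e w ^ (k + 1) * D.e w := by ring
      _ = D.e ((k + 1) • w) * D.e w := by rw [ih]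
      _ = D.e ((k + 1) • w + w) := hmul
      _ = D.e ((k + 1 + 1) • w) := by rw [show (k + 1 + 1) • w = (k + 1) • w + w from succ_nsmul w (k + 1)]

lemma prod_mem_fan {v : Fin n → Fin d → ℤ} {𝒮 : Finset (Finset (Fin n))}
    (hfan : IsStackyFan v 𝒮) (D : PSRData v 𝒮 A) (φ : A →ₐ[ℂ] ℂ) :
    ∀ T : Finset (Fin n), φ (∏ i ∈ T, D.e (v i)) ≠ 0 →
      T ∈ 𝒮 ∧ (∏ i ∈ T, D.e (v i)) = D.e (∑ i ∈ T, v i) := by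
  intro T
  induction T using Finset.induction_on with
  | empty => intro _; exact ⟨hfan.2.1, by simp [D.one]⟩
  | @insert a T haT ih =>
    intro hne
    rw [Finset.prod_insert haT] at hne
    have hTne : φ (∏ i ∈ T, D.e (v i)) ≠ 0 := by
      intro h0; apply hne; rw [map_mul, h0, mul_zero]
    obtain ⟨hT𝒮, hTe⟩ := ih hTne
    have va_supp : v a ∈ suppL v 𝒮 :=
      ⟨{a}, hfan.2.2.1 a, mem_cone_single v (Finset.mem_singleton_self a)⟩
    have wT_supp : (∑ i ∈ T, v i) ∈ suppL v 𝒮 := ⟨T, hT𝒮, sum_mem_cone v T⟩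
    by_cases hcone : ∃ S ∈ 𝒮, toR (v a) ∈ cone v S ∧ toR (∑ i ∈ T, v i) ∈ cone v S
    · obtain ⟨S, hS, hvaS, hwTS⟩ := hcone
      have haS : a ∈ S := mem_of_single_mem_cone hfan hS hvaS
      have hTS : T ⊆ S := subset_of_sum_mem_cone hfan hT𝒮 hS hwTS
      have hins : insert a T ⊆ S := Finset.insert_subset haS hTS
      have hmem𝒮 : insert a T ∈ 𝒮 := hfan.2.2.2.1 S hS _ hins
      have hmul := D.mul_of_cone _ va_supp _ wT_supp ⟨S, hS, hvaS, hwTS⟩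
      refine ⟨hmem𝒮, ?_⟩
      rw [Finset.prod_insert haT, hTe, hmul, Finset.sum_insert haT]
    · exfalso
      have h0 := D.mul_of_not_cone _ va_supp _ wT_supp hcone
      apply hne
      rw [hTe, h0, map_zero]

lemma ray_vanish {v : Fin n → Fin d → ℤ} {𝒮 : Finset (Finset (Fin n))}
    (hfan : IsStackyFan v 𝒮) (D : PSRData v 𝒮 A) (φ : A →ₐ[ℂ] ℂ)
    (hφ : ∀ j : Fin d, φ (∑ i, ((v i j : ℂ)) • D.e (v i)) = 0) :
    ∀ i, φ (D.e (v i)) = 0 := by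
  classical
  set I : Finset (Fin n) := Finset.univ.filter (fun i => φ (D.e (v i)) ≠ 0) with hI
  have hmemI : ∀ i, i ∈ I ↔ φ (D.e (v i)) ≠ 0 := by
    intro i; simp [hI]
  have hprod : φ (∏ i ∈ I, D.e (v i)) ≠ 0 := by
    rw [map_prod]
    exact Finset.prod_ne_zero_iff.mpr (fun i hi => (hmemI i).mp hi)
  have hI𝒮 : I ∈ 𝒮 := (prod_mem_fan hfan D φ I hprod).1
  have hindep := hfan.2.2.2.2.1 I hI𝒮
  have hj : ∀ j, ∑ i, (v i j : ℂ) * φ (D.e (v i)) = 0 := by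
    intro j
    have := hφ j
    rw [map_sum] at this
    simpa [smul_eq_mul] using this
  have hre : (fun i => (φ (D.e (v i))).re) = fun _ => (0:ℝ) := by
    apply coeff_unique hindep (fun i hi => ?_) (fun i _ => rfl)
    · funext j
      have h1 := congrArg Complex.re (hj j)
      rw [Complex.re_sum] at h1
      simp only [Complex.mul_re, Complex.intCast_re, Complex.intCast_im, zero_mul,
        sub_zero, Complex.zero_re] at h1
      simp only [Finset.sum_apply, Pi.smul_apply, smul_eq_mul, toR, zero_mul,
        Finset.sum_const_zero]
      rw [← h1]
      refine Finset.sum_congr rfl fun i _ => ?_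
      ring
    · have : φ (D.e (v i)) = 0 := by
        by_contra hne; exact hi ((hmemI i).mpr hne)
      rw [this]; rfl
  have him : (fun i => (φ (D.e (v i))).im) = fun _ => (0:ℝ) := by
    apply coeff_unique hindep (fun i hi => ?_) (fun i _ => rfl)
    · funext j
      have h1 := congrArg Complex.im (hj j)
      rw [Complex.im_sum] at h1
      simp only [Complex.mul_im, Complex.intCast_re, Complex.intCast_im, zero_mul,
        add_zero, Complex.zero_im] at h1
      simp only [Finset.sum_apply, Pi.smul_apply, smul_eq_mul, toR, zero_mul,
        Finset.sum_const_zero]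
      rw [← h1]
      refine Finset.sum_congr rfl fun i _ => ?_
      ring
    · have : φ (D.e (v i)) = 0 := by
        by_contra hne; exact hi ((hmemI i).mpr hne)
      rw [this]; rfl
  intro i
  have h1 := congrFun hre i
  have h2 := congrFun him i
  exact Complex.ext h1 h2



/-- Every `ℂ`-algebra homomorphism `φ : ℂ[N,Σ] → ℂ` killing `t_1, …, t_d` vanishes on `[w]`
for every nonzero lattice point `w` of `|Σ|`. -/
theorem algHom_vanishes_on_nonzero
    (d n : ℕ) (hd : 0 < d) (hn : 0 < n)
    (v : Fin n → Fin d → ℤ) (𝒮 : Finset (Finset (Fin n)))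
    (hfan : IsStackyFan v 𝒮)
    (A : Type) [CommRing A] [Algebra ℂ A] (D : PSRData v 𝒮 A)
    (φ : A →ₐ[ℂ] ℂ)
    (hφ : ∀ j : Fin d, φ (∑ i, ((v i j : ℂ)) • D.e (v i)) = 0) :
    ∀ w ∈ suppL v 𝒮, w ≠ 0 → φ (D.e w) = 0 := by
  intro w hw hw0
  obtain ⟨S, hS, a, ha0, hasupp, hx⟩ := hw
  have hray := ray_vanish hfan D φ hφ
  -- find i0 with a i0 > 0
  have hex : ∃ i0, 0 < a i0 := by
    by_contra hno
    push_neg at hno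
    have hz : ∀ i, a i = 0 := fun i => le_antisymm (hno i) (ha0 i)
    apply toR_ne_zero hw0
    rw [hx]; simp [hz]
  obtain ⟨i0, hi0pos⟩ := hex
  have hi0S : i0 ∈ S := by
    by_contra h
    exact absurd (hasupp i0 h) (ne_of_gt hi0pos)
  obtain ⟨m, hm⟩ := exists_nat_ge (1 / a i0)
  have hma : 1 ≤ (m : ℝ) * a i0 := by
    rw [div_le_iff₀ hi0pos] at hm
    linarith
  have hm1 : 1 ≤ m := by
    by_contra h
    push_neg at h
    interval_cases m
    simp at hma
    linarith
  obtain ⟨k, rfl⟩ : ∃ k, m = k + 1 := ⟨m - 1, (Nat.succ_pred_eq_of_pos hm1).symm⟩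
  set u : Fin d → ℤ := (k + 1) • w - v i0 with hu
  have hmw_cone : toR ((k + 1) • w) ∈ cone v S := cone_nsmul ⟨a, ha0, hasupp, hx⟩ (k + 1)
  have hu_cone : toR u ∈ cone v S := by
    refine ⟨fun i => ((k : ℝ) + 1) * a i - (if i = i0 then 1 else 0), ?_, ?_, ?_⟩
    · intro i
      show 0 ≤ ((k : ℝ) + 1) * a i - (if i = i0 then 1 else 0)
      by_cases hii : i = i0
      · subst hii
        simp only [if_pos rfl]
        push_cast at hma ⊢
        linarith
      · simp only [if_neg hii, sub_zero]
        have := ha0 i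
        positivity
    · intro i hi
      show ((k : ℝ) + 1) * a i - (if i = i0 then 1 else 0) = 0
      have hii : i ≠ i0 := fun h => hi (h ▸ hi0S)
      rw [hasupp i hi, if_neg hii]; ring
    · have htoRu : toR u = ((k : ℝ) + 1) • toR w - toR (v i0) := by
        funext j
        simp only [hu, toR, Pi.sub_apply, Pi.smul_apply]
        simp only [nsmul_eq_mul, smul_eq_mul]
        push_cast
        ring
      rw [htoRu, hx, Finset.smul_sum]
      have hvi0 : toR (v i0) = ∑ i, (if i = i0 then (1:ℝ) else 0) • toR (v i) := by
        simp [ite_smul]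
      rw [hvi0, ← Finset.sum_sub_distrib]
      refine Finset.sum_congr rfl fun i _ => ?_
      rw [sub_smul, smul_smul]
  have hu_supp : u ∈ suppL v 𝒮 := ⟨S, hS, hu_cone⟩
  have hvi0_supp : v i0 ∈ suppL v 𝒮 := ⟨S, hS, mem_cone_single v hi0S⟩
  have hmul := D.mul_of_cone _ hvi0_supp _ hu_supp ⟨S, hS, mem_cone_single v hi0S, hu_cone⟩
  have hsum : v i0 + u = (k + 1) • w := by
    funext j
    show v i0 j + ((k + 1) • w j - v i0 j) = (k + 1) • w j
    ring
  have hpow : φ (D.e w) ^ (k + 1) = 0 := by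
    rw [← map_pow, e_pow D hS ⟨a, ha0, hasupp, hx⟩ k, ← hsum, ← hmul, map_mul, hray i0, zero_mul]
  exact pow_eq_zero_iff (Nat.succ_ne_zero k) |>.mp hpow


end ToricStack
end
end

section
/- Let U ⊆ H_SR be the image of the subring of ℂ[N,Σ] generated by [v_1],…,[v_n] (the untwisted sector), and for each v ∈ Box(Σ) let H_v be the U-submodule of H_SR generated by the class of [v]. Then H_SR is the internal direct sum ⊕_{v∈Box(Σ)} H_v of the U-submodules H_v: the H_v span H_SR and are ℂ-linearly independent. -/
open scoped TensorProduct

noncomputable section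

namespace ToricStack

/-- The untwisted sector: the image in `H_SR` of the subring of `ℂ[N,Σ]` generated by
`[v_1], …, [v_n]`. -/
def untwisted {d n : ℕ} (v : Fin n → Fin d → ℤ) {A : Type} [CommRing A] [Algebra ℂ A]
    (e : (Fin d → ℤ) → A) : Subalgebra ℂ (HSR v A e) :=
  Algebra.adjoin ℂ (Set.range fun i : Fin n => Ideal.Quotient.mk (tIdeal v e) (e (v i)))

/-- The sector `H_w`: the `U`-submodule of `H_SR` generated by the class of `[w]`
(as a `ℂ`-subspace, the span of `U·[w]`). -/
def sector {d n : ℕ} (v : Fin n → Fin d → ℤ) {A : Type} [CommRing A] [Algebra ℂ A]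
    (e : (Fin d → ℤ) → A) (w : Fin d → ℤ) : Submodule ℂ (HSR v A e) :=
  Submodule.span ℂ
    {x : HSR v A e | ∃ u ∈ untwisted v e, x = u * Ideal.Quotient.mk (tIdeal v e) (e w)}

/-!
A lattice point `w ∈ |Σ|` has unique nonnegative coefficients `a` in the cones containing it (the
cones meet along faces and their rays are independent), and these are rational. Hence
`w = ∑ ⌊a_i⌋ v_i + boxPart w` with `boxPart w ∈ Box(Σ)`, and `[w] = ∏ [v_i]^⌊a_i⌋ · [boxPart w]`,
so the sectors span `H_SR`. Multiplying `[w]` by `[v_i]` gives `0` or `[w + v_i]`, which has the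
same box part, so the projections of `ℂ[N,Σ]` onto the span of the `[w]` with a given box part are
linear over the untwisted subring. Since every `t_j` lies in it, these orthogonal idempotents
preserve `⟨t_1,…,t_d⟩`, and their images, which contain the sectors, stay independent in `H_SR`.
-/

end ToricStack

section LinearAlgebra

open Submodule

theorem algebraMap_comp_mem_span_of_mem_span {R K L ι ι' : Type*} [CommRing R] [Field K]
    [Field L] [Algebra R K] [Algebra R L] [FaithfulSMul R K] [FaithfulSMul R L] [Finite ι']
    {u : ι → ι' → R} {w : ι' → R} (hu : LinearIndependent R u)
    (hw : algebraMap R L ∘ w ∈ span L (Set.range fun i => algebraMap R L ∘ u i)) :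
    algebraMap R K ∘ w ∈ span K (Set.range fun i => algebraMap R K ∘ u i) := by
  by_contra hwK
  have hK : LinearIndependent K fun o => algebraMap R K ∘ Option.elim o w u :=
    linearIndependent_option.2 ⟨linearIndependent_algebraMap_comp_iff.2 hu, hwK⟩
  have hL : LinearIndependent L fun o => algebraMap R L ∘ Option.elim o w u :=
    linearIndependent_algebraMap_comp_iff.2 (linearIndependent_algebraMap_comp_iff.1 hK)
  exact (linearIndependent_option.1 hL).2 hw

theorem iSupIndep_map_range_of_orthogonal {R M Q ι : Type*} [Ring R] [AddCommGroup M]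
    [Module R M] [AddCommGroup Q] [Module R Q] (q : M →ₗ[R] Q) (π : ι → M →ₗ[R] M)
    (hidem : ∀ b, π b ∘ₗ π b = π b) (horth : ∀ b c, b ≠ c → π b ∘ₗ π c = 0)
    (hker : ∀ b x, q x = 0 → q (π b x) = 0) :
    iSupIndep fun b => (LinearMap.range (π b)).map q := by
  intro b
  rw [Submodule.disjoint_def]
  rintro _ ⟨_, ⟨a, rfl⟩, rfl⟩ hx
  simp only [← Submodule.map_iSup] at hx
  obtain ⟨y, hy, hqy⟩ := hx
  have hπy : π b y = 0 :=
    (iSup₂_le fun c hc => LinearMap.range_le_ker_iff.2 (horth b c (Ne.symm hc)) :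
      (⨆ c, ⨆ (_ : c ≠ b), LinearMap.range (π c)) ≤ LinearMap.ker (π b)) hy
  have h := hker b (π b a - y) (by rw [map_sub, hqy, sub_self])
  rwa [map_sub, hπy, sub_zero, ← LinearMap.comp_apply (π b) (π b), hidem] at h

end LinearAlgebra

namespace ToricStack

variable {d n : ℕ} {v : Fin n → Fin d → ℤ} {𝒮 : Finset (Finset (Fin n))}

lemma toR_eq_algebraMap_comp (w : Fin d → ℤ) : toR w = algebraMap ℤ ℝ ∘ w := by
  funext j; simp [toR]

lemma toR_add (w w' : Fin d → ℤ) : toR (w + w') = toR w + toR w' := by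
  funext j; simp [toR]

lemma toR_sub_sum_nsmul (w : Fin d → ℤ) (m : Fin n → ℕ) :
    toR (w - ∑ i, m i • v i) = toR w - ∑ i, (m i : ℝ) • toR (v i) := by
  funext j; simp [toR, Finset.sum_apply]

lemma v_mem_cone {S : Finset (Fin n)} {i : Fin n} (hi : i ∈ S) : toR (v i) ∈ cone v S :=
  ⟨Pi.single i 1, fun j => by by_cases h : j = i <;> simp [h],
    fun j hj => by simp [show j ≠ i by rintro rfl; exact hj hi], by simp⟩

lemma add_mem_cone {S : Finset (Fin n)} {x y : Fin d → ℝ} (hx : x ∈ cone v S)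
    (hy : y ∈ cone v S) : x + y ∈ cone v S := by
  obtain ⟨a, ha0, haS, rfl⟩ := hx
  obtain ⟨b, hb0, hbS, rfl⟩ := hy
  exact ⟨a + b, fun i => add_nonneg (ha0 i) (hb0 i), fun i hi => by simp [haS i hi, hbS i hi],
    by simp [add_smul, Finset.sum_add_distrib]⟩

lemma eq_of_sum_smul_eq (hfan : IsStackyFan v 𝒮) {S : Finset (Fin n)} (hS : S ∈ 𝒮)
    {a b : Fin n → ℝ} (ha : ∀ i ∉ S, a i = 0) (hb : ∀ i ∉ S, b i = 0)
    (h : ∑ i, a i • toR (v i) = ∑ i, b i • toR (v i)) : a = b := by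
  have hli : LinearIndepOn ℝ (fun i => toR (v i)) (S : Set (Fin n)) := hfan.2.2.2.2.1 S hS
  have hsum : ∑ i ∈ S, (a - b) i • toR (v i) = 0 := by
    rw [Finset.sum_subset (Finset.subset_univ S) fun i _ hi => by simp [ha i hi, hb i hi]]
    simp [sub_smul, Finset.sum_sub_distrib, h]
  funext i
  by_cases hi : i ∈ S
  · exact sub_eq_zero.1 (linearIndepOn_iff''.1 hli S (a - b) subset_rfl
      (fun j hj => by simp [ha j hj, hb j hj]) hsum i hi)
  · rw [ha i hi, hb i hi]

def IsFanCoeff (v : Fin n → Fin d → ℤ) (𝒮 : Finset (Finset (Fin n))) (x : Fin d → ℝ)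
    (a : Fin n → ℝ) : Prop :=
  ∃ S ∈ 𝒮, (∀ i, 0 ≤ a i) ∧ (∀ i ∉ S, a i = 0) ∧ x = ∑ i, a i • toR (v i)

lemma IsFanCoeff.unique (hfan : IsStackyFan v 𝒮) {x : Fin d → ℝ} {a b : Fin n → ℝ}
    (ha : IsFanCoeff v 𝒮 x a) (hb : IsFanCoeff v 𝒮 x b) : a = b := by
  obtain ⟨S, hS, ha0, haS, rfl⟩ := ha
  obtain ⟨S', hS', hb0, hbS', hx⟩ := hb
  have hmem : ∑ i, a i • toR (v i) ∈ cone v S ∩ cone v S' :=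
    ⟨⟨a, ha0, haS, rfl⟩, ⟨b, hb0, hbS', hx⟩⟩
  rw [hfan.2.2.2.2.2 S hS S' hS'] at hmem
  obtain ⟨c, -, hc, hxc⟩ := hmem
  have hcS : ∀ i ∉ S, c i = 0 := fun i hi => hc i (by simp [hi])
  have hcS' : ∀ i ∉ S', c i = 0 := fun i hi => hc i (by simp [hi])
  rw [eq_of_sum_smul_eq hfan hS haS hcS hxc,
    eq_of_sum_smul_eq hfan hS' hbS' hcS' (hx.symm.trans hxc)]

open scoped Classical in
def fanCoeff (v : Fin n → Fin d → ℤ) (𝒮 : Finset (Finset (Fin n))) (x : Fin d → ℝ) :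
    Fin n → ℝ :=
  if h : ∃ a, IsFanCoeff v 𝒮 x a then h.choose else 0

lemma fanCoeff_nonneg (x : Fin d → ℝ) (i : Fin n) : 0 ≤ fanCoeff v 𝒮 x i := by
  unfold fanCoeff
  split_ifs with h
  · obtain ⟨_, _, h0, _⟩ := h.choose_spec
    exact h0 i
  · exact le_rfl

lemma fanCoeff_eq (hfan : IsStackyFan v 𝒮) {x : Fin d → ℝ} {a : Fin n → ℝ}
    (h : IsFanCoeff v 𝒮 x a) : fanCoeff v 𝒮 x = a := by
  have hex : ∃ a, IsFanCoeff v 𝒮 x a := ⟨a, h⟩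
  rw [fanCoeff, dif_pos hex]
  exact hex.choose_spec.unique hfan h

lemma fanCoeff_of_mem_cone (hfan : IsStackyFan v 𝒮) {S : Finset (Fin n)} (hS : S ∈ 𝒮)
    {x : Fin d → ℝ} (hx : x ∈ cone v S) :
    (∀ i ∉ S, fanCoeff v 𝒮 x i = 0) ∧ ∑ i, fanCoeff v 𝒮 x i • toR (v i) = x := by
  obtain ⟨a, ha0, haS, rfl⟩ := hx
  rw [fanCoeff_eq hfan ⟨S, hS, ha0, haS, rfl⟩]
  exact ⟨haS, rfl⟩

lemma fanCoeff_add (hfan : IsStackyFan v 𝒮) {S : Finset (Fin n)} (hS : S ∈ 𝒮)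
    {x y : Fin d → ℝ} (hx : x ∈ cone v S) (hy : y ∈ cone v S) :
    fanCoeff v 𝒮 (x + y) = fanCoeff v 𝒮 x + fanCoeff v 𝒮 y := by
  obtain ⟨hxS, hxsum⟩ := fanCoeff_of_mem_cone hfan hS hx
  obtain ⟨hyS, hysum⟩ := fanCoeff_of_mem_cone hfan hS hy
  refine fanCoeff_eq hfan ⟨S, hS, fun i => add_nonneg (fanCoeff_nonneg x i) (fanCoeff_nonneg y i),
    fun i hi => by simp [hxS i hi, hyS i hi], ?_⟩
  simp [add_smul, Finset.sum_add_distrib, hxsum, hysum]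

lemma fanCoeff_v (hfan : IsStackyFan v 𝒮) (i : Fin n) :
    fanCoeff v 𝒮 (toR (v i)) = Pi.single i 1 := by
  refine fanCoeff_eq hfan ⟨{i}, hfan.2.2.1 i, fun j => ?_, fun j hj => ?_, by simp⟩
  · by_cases h : j = i <;> simp [h]
  · simp [show j ≠ i by simpa using hj]

lemma toR_eq_sum_of_coords {w : Fin d → ℤ} {α : Fin n → ℚ}
    (h : ∀ j, (w j : ℚ) = ∑ i, α i * v i j) : toR w = ∑ i, (α i : ℝ) • toR (v i) := by
  funext j
  simp only [toR, Finset.sum_apply, Pi.smul_apply, smul_eq_mul]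
  exact_mod_cast h j

lemma exists_rat_coeff (hfan : IsStackyFan v 𝒮) {S : Finset (Fin n)} (hS : S ∈ 𝒮)
    {w : Fin d → ℤ} {a : Fin n → ℝ} (ha : ∀ i ∉ S, a i = 0)
    (hw : toR w = ∑ i, a i • toR (v i)) :
    ∃ α : Fin n → ℚ, (∀ i, (α i : ℝ) = a i) ∧ ∀ j, (w j : ℚ) = ∑ i, α i * v i j := by
  have hli : LinearIndependent ℤ fun i : (S : Set (Fin n)) => v i := by
    have hliR := hfan.2.2.2.2.1 S hS
    simp only [toR_eq_algebraMap_comp] at hliR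
    exact linearIndependent_algebraMap_comp_iff.1 hliR
  have hwR : algebraMap ℤ ℝ ∘ w ∈
      Submodule.span ℝ (Set.range fun i : (S : Set (Fin n)) => algebraMap ℤ ℝ ∘ v i) := by
    rw [← toR_eq_algebraMap_comp, hw]
    refine Submodule.sum_mem _ fun i _ => ?_
    by_cases hi : i ∈ S
    · exact Submodule.smul_mem _ _
        (Submodule.subset_span ⟨⟨i, hi⟩, (toR_eq_algebraMap_comp _).symm⟩)
    · simp [ha i hi]
  have hwQ := algebraMap_comp_mem_span_of_mem_span (K := ℚ) hli hwR
  rw [← Set.image_eq_range (fun i => algebraMap ℤ ℚ ∘ v i),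
    Finsupp.mem_span_image_iff_linearCombination] at hwQ
  obtain ⟨l, hlS, hl⟩ := hwQ
  have hcoords : ∀ j, (w j : ℚ) = ∑ i, l i * v i j := by
    intro j
    rw [Finsupp.linearCombination_apply, Finsupp.sum_fintype _ _ (by simp)] at hl
    simpa [Finset.sum_apply] using (congrFun hl j).symm
  refine ⟨l, fun i => ?_, hcoords⟩
  have hlS' : ∀ i ∉ S, ((l i : ℚ) : ℝ) = 0 := fun i hi => by
    simp [Finsupp.notMem_support_iff.1 fun h => hi (hlS h)]
  exact congrFun (eq_of_sum_smul_eq hfan hS hlS' ha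
    ((toR_eq_sum_of_coords hcoords).symm.trans hw)) i

def boxPart (v : Fin n → Fin d → ℤ) (𝒮 : Finset (Finset (Fin n))) (w : Fin d → ℤ) :
    Fin d → ℤ :=
  w - ∑ i, ⌊fanCoeff v 𝒮 (toR w) i⌋₊ • v i

lemma toR_boxPart (hfan : IsStackyFan v 𝒮) {S : Finset (Fin n)} (hS : S ∈ 𝒮)
    {w : Fin d → ℤ} (hw : toR w ∈ cone v S) :
    toR (boxPart v 𝒮 w) = ∑ i,
      (fanCoeff v 𝒮 (toR w) i - ⌊fanCoeff v 𝒮 (toR w) i⌋₊) • toR (v i) := by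
  rw [boxPart, toR_sub_sum_nsmul]
  simp only [sub_smul, Finset.sum_sub_distrib, (fanCoeff_of_mem_cone hfan hS hw).2]

lemma boxPart_mem_Box (hfan : IsStackyFan v 𝒮) {w : Fin d → ℤ} (hw : w ∈ suppL v 𝒮) :
    boxPart v 𝒮 w ∈ Box v 𝒮 := by
  obtain ⟨S, hS, hwS⟩ := hw
  set a := fanCoeff v 𝒮 (toR w)
  have haS : ∀ i ∉ S, a i - ⌊a i⌋₊ = 0 := fun i hi => by
    simp [a, (fanCoeff_of_mem_cone hfan hS hwS).1 i hi]
  obtain ⟨α, hαa, hα⟩ := exists_rat_coeff hfan hS haS (toR_boxPart hfan hS hwS)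
  refine ⟨S, α, hS, fun i => ⟨?_, ?_⟩, fun i hi => ?_, hα⟩
  · have : (0 : ℝ) ≤ α i := hαa i ▸ sub_nonneg.2 (Nat.floor_le (fanCoeff_nonneg _ i))
    exact_mod_cast this
  · have : (α i : ℝ) < 1 := hαa i ▸ sub_lt_iff_lt_add'.2 (Nat.lt_floor_add_one (a i))
    exact_mod_cast this
  · have : (α i : ℝ) = 0 := hαa i ▸ haS i hi
    exact_mod_cast this

lemma boxPart_of_mem_Box (hfan : IsStackyFan v 𝒮) {b : Fin d → ℤ} (hb : b ∈ Box v 𝒮) :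
    boxPart v 𝒮 b = b := by
  obtain ⟨S, α, hS, hα, hαS, hcoords⟩ := hb
  have hcoeff : fanCoeff v 𝒮 (toR b) = fun i => (α i : ℝ) :=
    fanCoeff_eq hfan ⟨S, hS, fun i => by simpa using (hα i).1,
      fun i hi => by simp [hαS i hi], toR_eq_sum_of_coords hcoords⟩
  have hfloor : ∀ i, ⌊(α i : ℝ)⌋₊ = 0 := fun i =>
    Nat.floor_eq_zero.2 (by exact_mod_cast (hα i).2)
  simp [boxPart, hcoeff, hfloor]

lemma boxPart_add_v (hfan : IsStackyFan v 𝒮) {S : Finset (Fin n)} (hS : S ∈ 𝒮)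
    {w : Fin d → ℤ} {i : Fin n} (hw : toR w ∈ cone v S) (hi : toR (v i) ∈ cone v S) :
    boxPart v 𝒮 (w + v i) = boxPart v 𝒮 w := by
  have hfloor (a : Fin n → ℝ) (ha : ∀ j, 0 ≤ a j) (j : Fin n) :
      ⌊(a + Pi.single i 1 : Fin n → ℝ) j⌋₊ = ⌊a j⌋₊ + (Pi.single i 1 : Fin n → ℕ) j := by
    by_cases h : j = i
    · subst h; simpa using Nat.floor_add_one (ha j)
    · simp [h]
  rw [boxPart, boxPart, toR_add, fanCoeff_add hfan hS hw hi, fanCoeff_v hfan]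
  simp only [hfloor _ (fanCoeff_nonneg _), add_smul, Finset.sum_add_distrib]
  simp [Pi.single_apply]

lemma mem_suppL_of_mem_Box {b : Fin d → ℤ} (hb : b ∈ Box v 𝒮) : b ∈ suppL v 𝒮 := by
  obtain ⟨S, α, hS, hα, hαS, hcoords⟩ := hb
  exact ⟨S, hS, _, fun i => by simpa using (hα i).1, fun i hi => by simp [hαS i hi],
    toR_eq_sum_of_coords hcoords⟩

section PartialSemigroupRing

variable {A : Type} [CommRing A] [Algebra ℂ A]

def untwistedLift (v : Fin n → Fin d → ℤ) (e : (Fin d → ℤ) → A) : Subalgebra ℂ A :=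
  Algebra.adjoin ℂ (Set.range fun i => e (v i))

lemma untwisted_eq_map (v : Fin n → Fin d → ℤ) (e : (Fin d → ℤ) → A) :
    untwisted v e = (untwistedLift v e).map (Ideal.Quotient.mkₐ ℂ (tIdeal v e)) := by
  rw [untwisted, untwistedLift, AlgHom.map_adjoin, ← Set.range_comp]
  rfl

namespace PSRData

variable (D : PSRData v 𝒮 A)

def basis : Module.Basis (suppL v 𝒮) ℂ A :=
  .mk D.indep (by rw [← Set.image_eq_range, D.spans])

lemma basis_apply (w : suppL v 𝒮) : D.basis w = D.e w :=
  Module.Basis.mk_apply _ _ _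

def boxProj (b : Fin d → ℤ) : A →ₗ[ℂ] A :=
  D.basis.constr ℂ fun w => if boxPart v 𝒮 w = b then D.e w else 0

lemma boxProj_e (b : Fin d → ℤ) {w : Fin d → ℤ} (hw : w ∈ suppL v 𝒮) :
    D.boxProj b (D.e w) = if boxPart v 𝒮 w = b then D.e w else 0 := by
  simpa [boxProj, basis_apply] using D.basis.constr_basis ℂ
    (fun w : suppL v 𝒮 => if boxPart v 𝒮 w = b then D.e w else 0) ⟨w, hw⟩

lemma boxProj_comp_self (b : Fin d → ℤ) : D.boxProj b ∘ₗ D.boxProj b = D.boxProj b :=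
  D.basis.ext fun ⟨w, hw⟩ => by
    simp only [LinearMap.comp_apply, basis_apply, D.boxProj_e b hw]
    split_ifs with h <;> simp [D.boxProj_e b hw, h]

lemma boxProj_comp_of_ne {b c : Fin d → ℤ} (hbc : b ≠ c) : D.boxProj b ∘ₗ D.boxProj c = 0 :=
  D.basis.ext fun ⟨w, hw⟩ => by
    simp only [LinearMap.comp_apply, basis_apply, D.boxProj_e c hw, LinearMap.zero_apply]
    split_ifs with h
    · simp [D.boxProj_e b hw, h, hbc.symm]
    · exact map_zero _

lemma boxProj_e_v_mul (hfan : IsStackyFan v 𝒮) (b : Fin d → ℤ) (i : Fin n) (x : A) :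
    D.boxProj b (D.e (v i) * x) = D.e (v i) * D.boxProj b x := by
  suffices (D.boxProj b).comp (LinearMap.mulLeft ℂ (D.e (v i))) =
      (LinearMap.mulLeft ℂ (D.e (v i))).comp (D.boxProj b) from LinearMap.congr_fun this x
  refine D.basis.ext fun ⟨w, hw⟩ => ?_
  simp only [LinearMap.comp_apply, LinearMap.mulLeft_apply, basis_apply, D.boxProj_e b hw]
  have hvi : v i ∈ suppL v 𝒮 := ⟨{i}, hfan.2.2.1 i, v_mem_cone (Finset.mem_singleton_self i)⟩
  by_cases hc : ∃ S ∈ 𝒮, toR (v i) ∈ cone v S ∧ toR w ∈ cone v S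
  · obtain ⟨S, hS, hiS, hwS⟩ := hc
    have hsum : v i + w ∈ suppL v 𝒮 := ⟨S, hS, by rw [toR_add]; exact add_mem_cone hiS hwS⟩
    have hbox : boxPart v 𝒮 (v i + w) = boxPart v 𝒮 w := by
      rw [add_comm]; exact boxPart_add_v hfan hS hwS hiS
    rw [D.mul_of_cone _ hvi _ hw ⟨S, hS, hiS, hwS⟩, D.boxProj_e b hsum, hbox]
    split_ifs <;> simp [D.mul_of_cone _ hvi _ hw ⟨S, hS, hiS, hwS⟩]
  · rw [D.mul_of_not_cone _ hvi _ hw hc, map_zero]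
    split_ifs <;> simp [D.mul_of_not_cone _ hvi _ hw hc]

lemma boxProj_mul_of_mem_untwistedLift (hfan : IsStackyFan v 𝒮) (b : Fin d → ℤ) {u : A}
    (hu : u ∈ untwistedLift v D.e) (x : A) : D.boxProj b (u * x) = u * D.boxProj b x := by
  induction hu using Algebra.adjoin_induction generalizing x with
  | mem y hy =>
    obtain ⟨i, rfl⟩ := hy
    exact D.boxProj_e_v_mul hfan b i x
  | algebraMap r => simp [Algebra.algebraMap_eq_smul_one]
  | add y z _ _ hy hz => simp [add_mul, hy, hz]
  | mul y z _ _ hy hz => rw [mul_assoc, hy, hz, mul_assoc]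

lemma boxProj_mem_tIdeal (hfan : IsStackyFan v 𝒮) (b : Fin d → ℤ) {x : A}
    (hx : x ∈ tIdeal v D.e) : D.boxProj b x ∈ tIdeal v D.e := by
  obtain ⟨c, rfl⟩ := Ideal.mem_span_range_iff_exists_fun.1 hx
  have ht (j : Fin d) : ∑ i, (v i j : ℂ) • D.e (v i) ∈ untwistedLift v D.e :=
    Subalgebra.sum_mem _ fun i _ =>
      Subalgebra.smul_mem _ (Algebra.subset_adjoin (Set.mem_range_self i)) _
  rw [map_sum]
  refine Ideal.sum_mem _ fun j _ => ?_
  rw [mul_comm, D.boxProj_mul_of_mem_untwistedLift hfan b (ht j)]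
  exact Ideal.mul_mem_right _ _ (Ideal.subset_span ⟨j, rfl⟩)

lemma exists_e_add_eq_mul_of_mem_closure {S : Finset (Fin n)} (hS : S ∈ 𝒮) {y : Fin d → ℤ}
    (hy : y ∈ AddSubmonoid.closure (v '' S)) :
    toR y ∈ cone v S ∧ ∀ b, toR b ∈ cone v S →
      ∃ u ∈ untwistedLift v D.e, D.e (y + b) = u * D.e b := by
  induction hy using AddSubmonoid.closure_induction with
  | mem y hy =>
    obtain ⟨i, hi, rfl⟩ := hy
    refine ⟨v_mem_cone hi,
      fun b hb => ⟨D.e (v i), Algebra.subset_adjoin (Set.mem_range_self i), ?_⟩⟩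
    exact (D.mul_of_cone _ ⟨S, hS, v_mem_cone hi⟩ _ ⟨S, hS, hb⟩
      ⟨S, hS, v_mem_cone hi, hb⟩).symm
  | zero =>
    exact ⟨⟨0, fun _ => le_rfl, fun _ _ => rfl, by funext j; simp [toR]⟩,
      fun b _ => ⟨1, one_mem _, by simp⟩⟩
  | add y z _ _ hy hz =>
    refine ⟨by rw [toR_add]; exact add_mem_cone hy.1 hz.1, fun b hb => ?_⟩
    obtain ⟨u₂, hu₂, h₂⟩ := hz.2 b hb
    obtain ⟨u₁, hu₁, h₁⟩ := hy.2 (z + b) (by rw [toR_add]; exact add_mem_cone hz.1 hb)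
    exact ⟨u₁ * u₂, mul_mem hu₁ hu₂, by rw [add_assoc, h₁, h₂, mul_assoc]⟩

lemma exists_e_eq_mul_e_boxPart (hfan : IsStackyFan v 𝒮) {w : Fin d → ℤ}
    (hw : w ∈ suppL v 𝒮) :
    ∃ u ∈ untwistedLift v D.e, D.e w = u * D.e (boxPart v 𝒮 w) := by
  obtain ⟨S, hS, hwS⟩ := hw
  have hS0 := (fanCoeff_of_mem_cone hfan hS hwS).1
  set y := ∑ i, ⌊fanCoeff v 𝒮 (toR w) i⌋₊ • v i
  have hyS : y ∈ AddSubmonoid.closure (v '' S) :=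
    AddSubmonoid.sum_mem _ fun i _ => by
      by_cases hi : i ∈ S
      · exact AddSubmonoid.nsmul_mem _
          (AddSubmonoid.subset_closure (Set.mem_image_of_mem v hi)) _
      · simp [hS0 i hi]
  have hbox : toR (boxPart v 𝒮 w) ∈ cone v S :=
    ⟨_, fun i => sub_nonneg.2 (Nat.floor_le (fanCoeff_nonneg _ i)),
      fun i hi => by simp [hS0 i hi], toR_boxPart hfan hS hwS⟩
  have hdecomp : y + boxPart v 𝒮 w = w := add_sub_cancel y w
  obtain ⟨u, hu, h⟩ := (D.exists_e_add_eq_mul_of_mem_closure hS hyS).2 _ hbox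
  rw [hdecomp] at h
  exact ⟨u, hu, h⟩

lemma sector_le_map_range_boxProj (hfan : IsStackyFan v 𝒮) {b : Fin d → ℤ}
    (hb : b ∈ Box v 𝒮) :
    sector v D.e b ≤
      (LinearMap.range (D.boxProj b)).map (Ideal.Quotient.mkₐ ℂ (tIdeal v D.e)).toLinearMap := by
  refine Submodule.span_le.2 ?_
  rintro _ ⟨_, hx, rfl⟩
  rw [untwisted_eq_map] at hx
  obtain ⟨u, hu, rfl⟩ := Subalgebra.mem_map.1 hx
  refine ⟨u * D.e b, ⟨u * D.e b, ?_⟩, map_mul (Ideal.Quotient.mkₐ ℂ _) u (D.e b)⟩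
  rw [D.boxProj_mul_of_mem_untwistedLift hfan b hu, D.boxProj_e b (mem_suppL_of_mem_Box hb),
    if_pos (boxPart_of_mem_Box hfan hb)]

lemma iSupIndep_sector (hfan : IsStackyFan v 𝒮) :
    iSupIndep fun b : Box v 𝒮 => sector v D.e b := by
  refine (iSupIndep_map_range_of_orthogonal _ (fun b : Box v 𝒮 => D.boxProj b)
    (fun b => D.boxProj_comp_self b) (fun b c h => D.boxProj_comp_of_ne (Subtype.coe_ne_coe.2 h))
    fun b x hx => ?_).mono fun b => D.sector_le_map_range_boxProj hfan b.2
  exact Ideal.Quotient.eq_zero_iff_mem.2 (D.boxProj_mem_tIdeal hfan b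
    (Ideal.Quotient.eq_zero_iff_mem.1 hx))

lemma iSup_sector_eq_top (hfan : IsStackyFan v 𝒮) : (⨆ w ∈ Box v 𝒮, sector v D.e w) = ⊤ := by
  refine top_unique ?_
  rw [← (LinearMap.range_eq_top (f := (Ideal.Quotient.mkₐ ℂ (tIdeal v D.e)).toLinearMap)).2
      (Ideal.Quotient.mkₐ_surjective ℂ _),
    LinearMap.range_eq_map, ← D.spans, Submodule.map_span, Submodule.span_le]
  rintro _ ⟨_, ⟨w, hw, rfl⟩, rfl⟩
  obtain ⟨u, hu, hwu⟩ := D.exists_e_eq_mul_e_boxPart hfan hw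
  refine Submodule.mem_iSup_of_mem (boxPart v 𝒮 w) (Submodule.mem_iSup_of_mem
    (boxPart_mem_Box hfan hw) (Submodule.subset_span ⟨Ideal.Quotient.mk _ u, ?_, ?_⟩))
  · rw [untwisted_eq_map]
    exact Subalgebra.mem_map.2 ⟨u, hu, rfl⟩
  · simp [hwu]

end PSRData

end PartialSemigroupRing

theorem sector_decomposition_general
    (d n : ℕ)
    (v : Fin n → Fin d → ℤ) (𝒮 : Finset (Finset (Fin n)))
    (hfan : IsStackyFan v 𝒮)
    (A : Type) [CommRing A] [Algebra ℂ A] (D : PSRData v 𝒮 A) :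
    (⨆ w ∈ Box v 𝒮, sector v D.e w) = ⊤ ∧
    iSupIndep (fun w : Box v 𝒮 => sector v D.e w) :=
  ⟨D.iSup_sector_eq_top hfan, D.iSupIndep_sector hfan⟩

/-- `H_SR` is the internal direct sum `⊕_{v ∈ Box(Σ)} H_v` of the sectors: the `H_v` span
`H_SR` and are `ℂ`-linearly independent. -/
theorem sector_decomposition
    (d n : ℕ) (hd : 0 < d) (hn : 0 < n)
    (v : Fin n → Fin d → ℤ) (𝒮 : Finset (Finset (Fin n)))
    (hfan : IsStackyFan v 𝒮)
    (A : Type) [CommRing A] [Algebra ℂ A] (D : PSRData v 𝒮 A) :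
    (⨆ w ∈ Box v 𝒮, sector v D.e w) = ⊤ ∧
    iSupIndep (fun w : Box v 𝒮 => sector v D.e w) :=
  sector_decomposition_general d n v 𝒮 hfan A D

end ToricStack
end
end

section
/- In the formal power series ring ℤ[[t, u_1, …, u_d]], let F := Σ_{l∈ℕ} Σ_{s∈ℕ^d, h_1 s_1+⋯+h_d s_d ≥ l} t^l·u_1^{s_1}⋯u_d^{s_d} (a well-defined power series, since each monomial t^l u^s occurs with coefficient 0 or 1). Then (1 − t)·(Π_{i=1}^d (1 − u_i t^{h_i}))·(Π_{i=1}^d (1 − u_i))·F = Π_{i=1}^d (1 − u_i t^{h_i}) − t·Π_{i=1}^d (1 − u_i). Equivalently, since 1 − t and 1 − u_i t^{h_i} are units in ℤ[[t, u_1,…,u_d]], Σ_{l≥0} t^l (Π_i (1−u_i)) Σ_{s: h·s ≥ l} u^s = 1/(1−t) − (t/(1−t))·Π_{i=1}^d (1−u_i)/(1−u_i t^{h_i}). -/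
/-!
Multiplying `F = ∑_s uˢ ∑_{l ≤ h·s} tˡ` by `1 - t` telescopes each inner sum, leaving
`∑_s uˢ - t ∑_s uˢ t^{h·s}`. For any weights `w`, `∑_s uˢ t^{w·s}` is the inverse of
`∏ᵢ (1 - uᵢ t^{wᵢ})`, as one checks by peeling off one factor at a time; taking `w = 0` and `w = h`
turns the telescoped identity into the claimed one.
-/

noncomputable section

open MvPowerSeries

namespace MvPowerSeries

theorem one_sub_monomial_mul_eq_of_coeff {σ R : Type*} [Ring R] {m : σ →₀ ℕ}
    {f g : MvPowerSeries σ R} (hlt : ∀ e, ¬m ≤ e → coeff e f = coeff e g)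
    (hadd : ∀ e, coeff (m + e) f = coeff (m + e) g + coeff e f) :
    (1 - monomial m 1) * f = g := by
  ext e
  rw [sub_mul, one_mul, map_sub, coeff_monomial_mul, one_mul]
  split_ifs with hm
  · obtain ⟨e, rfl⟩ := exists_add_of_le hm
    rw [add_tsub_cancel_left, hadd, add_sub_cancel_right]
  · rw [sub_zero, hlt e hm]

section WeightedGeometric

variable {ι : Type*} [Fintype ι] [DecidableEq ι] (R : Type*) [CommRing R]

/-- `∏_{i ∈ S} 1 / (1 - uᵢ t^{wᵢ}) = ∑_{supp s ⊆ S} uˢ t^{w·s}`, with `uᵢ = X (some i)`, `t = X none`. -/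
def weightedGeometric (w : ι → ℕ) (S : Finset ι) : MvPowerSeries (Option ι) R :=
  fun e => if (∀ i ∉ S, e (some i) = 0) ∧ e none = ∑ i, w i * e (some i) then 1 else 0

variable {R}

theorem coeff_weightedGeometric (w : ι → ℕ) (S : Finset ι) (e : Option ι →₀ ℕ) :
    coeff e (weightedGeometric R w S) =
      if (∀ i ∉ S, e (some i) = 0) ∧ e none = ∑ i, w i * e (some i) then 1 else 0 :=
  rfl

theorem weightedGeometric_empty (w : ι → ℕ) : weightedGeometric R w ∅ = 1 := by
  ext e
  rw [coeff_weightedGeometric, coeff_one]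
  congr 1
  refine propext ⟨fun ⟨hsome, hnone⟩ => ?_, fun he => by simp [he]⟩
  ext (_ | i)
  · simp [hnone, hsome]
  · simpa using hsome i

theorem one_sub_mul_weightedGeometric_insert (w : ι → ℕ) {S : Finset ι} {j : ι} (hj : j ∉ S) :
    (1 - X (some j) * X none ^ w j) * weightedGeometric R w (insert j S) =
      weightedGeometric R w S := by
  rw [X_pow_eq, X, monomial_mul_monomial, one_mul]
  set m : Option ι →₀ ℕ := Finsupp.single (some j) 1 + Finsupp.single none (w j)
  apply one_sub_monomial_mul_eq_of_coeff
  · intro e he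
    rw [coeff_weightedGeometric, coeff_weightedGeometric]
    by_cases hej : e (some j) = 0
    · congr 1
      apply propext
      constructor <;> rintro ⟨hs, hn⟩ <;> refine ⟨fun i hi => ?_, hn⟩
      · obtain rfl | hij := eq_or_ne i j
        · exact hej
        · exact hs i (by simp_all)
      · exact hs i (by simp_all)
    · rw [if_neg, if_neg]
      · rintro ⟨hs, -⟩
        exact hej (hs j hj)
      · rintro ⟨-, hn⟩
        apply he
        have hwj : w j ≤ e none := by
          rw [hn]
          exact (Nat.le_mul_of_pos_right _ (Nat.pos_of_ne_zero hej)).trans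
            (Finset.single_le_sum (f := fun i => w i * e (some i)) (fun _ _ => Nat.zero_le _)
              (Finset.mem_univ j))
        intro x
        rcases x with _ | i
        · simpa [m] using hwj
        · obtain rfl | hij := eq_or_ne i j
          · simpa [m] using Nat.one_le_iff_ne_zero.mpr hej
          · simp [m, hij.symm]
  · intro e
    have hS : coeff (m + e) (weightedGeometric R w S) = 0 := by
      rw [coeff_weightedGeometric, if_neg]
      rintro ⟨hs, -⟩
      simpa [m] using hs j hj
    rw [hS, zero_add, coeff_weightedGeometric, coeff_weightedGeometric]
    congr 1
    simp +contextual [m, Finsupp.single_apply, Finset.sum_add_distrib, mul_add, @eq_comm _ j]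

theorem prod_one_sub_mul_weightedGeometric (w : ι → ℕ) (S : Finset ι) :
    (∏ i ∈ S, (1 - X (some i) * X none ^ w i)) * weightedGeometric R w S = 1 := by
  induction S using Finset.induction_on with
  | empty => rw [Finset.prod_empty, one_mul, weightedGeometric_empty]
  | insert j S hj ih =>
    rw [Finset.prod_insert hj, mul_comm (1 - _), mul_assoc,
      one_sub_mul_weightedGeometric_insert w hj, ih]

theorem coeff_weightedGeometric_univ (w : ι → ℕ) (e : Option ι →₀ ℕ) :
    coeff e (weightedGeometric R w Finset.univ) =
      if e none = ∑ i, w i * e (some i) then 1 else 0 := by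
  simp [coeff_weightedGeometric]

theorem one_sub_X_none_mul_eq (w : ι → ℕ) {F : MvPowerSeries (Option ι) R}
    (hF : ∀ e, coeff e F = if e none ≤ ∑ i, w i * e (some i) then 1 else 0) :
    (1 - X none) * F =
      weightedGeometric R 0 Finset.univ - X none * weightedGeometric R w Finset.univ := by
  rw [X]
  apply one_sub_monomial_mul_eq_of_coeff
  · intro e he
    have he0 : e none = 0 := by simpa using he
    rw [map_sub, coeff_monomial_mul, if_neg he, sub_zero, hF, coeff_weightedGeometric_univ]
    simp [he0]
  · intro e
    rw [map_sub, coeff_add_monomial_mul, coeff_weightedGeometric_univ, hF, hF,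
      coeff_weightedGeometric_univ]
    simp only [Finsupp.add_apply, Finsupp.single_eq_same, Finsupp.single_apply, reduceCtorEq,
      if_false, zero_add, Pi.zero_apply, zero_mul, Finset.sum_const_zero, one_mul]
    split_ifs <;> first | omega | simp

end WeightedGeometric

end MvPowerSeries

theorem weighted_blowdown_generating_function_general
    (d : ℕ) (h : Fin d → ℕ)
    (t : MvPowerSeries (Option (Fin d)) ℤ) (ht : t = MvPowerSeries.X none)
    (u : Fin d → MvPowerSeries (Option (Fin d)) ℤ) (hu : ∀ i, u i = MvPowerSeries.X (some i))
    (F : MvPowerSeries (Option (Fin d)) ℤ)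
    (hF : ∀ e : Option (Fin d) →₀ ℕ,
      MvPowerSeries.coeff e F = if e none ≤ ∑ i, h i * e (some i) then 1 else 0) :
    IsUnit (1 - t) ∧ (∀ i, IsUnit (1 - u i * t ^ h i)) ∧
    (1 - t) * (∏ i, (1 - u i * t ^ h i)) * ((∏ i, (1 - u i)) * F) =
      ∏ i, (1 - u i * t ^ h i) - t * ∏ i, (1 - u i) := by
  subst ht
  simp only [hu]
  refine ⟨by simp [isUnit_iff_constantCoeff], fun i => by simp [isUnit_iff_constantCoeff], ?_⟩
  have hA := prod_one_sub_mul_weightedGeometric (R := ℤ) (0 : Fin d → ℕ) Finset.univ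
  simp only [Pi.zero_apply, pow_zero, mul_one] at hA
  have hB := prod_one_sub_mul_weightedGeometric (R := ℤ) h Finset.univ
  calc (1 - X none) * (∏ i, (1 - X (some i) * X none ^ h i)) * ((∏ i, (1 - X (some i))) * F)
      = (∏ i, (1 - X (some i) * X none ^ h i)) * (∏ i, (1 - X (some i))) *
          ((1 - X none) * F) := by ring
    _ = (∏ i, (1 - X (some i) * X none ^ h i)) *
          ((∏ i, (1 - X (some i))) * weightedGeometric ℤ 0 Finset.univ) -
        X none * (∏ i, (1 - X (some i))) *
          ((∏ i, (1 - X (some i) * X none ^ h i)) * weightedGeometric ℤ h Finset.univ) := by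
      rw [one_sub_X_none_mul_eq h hF]
      ring
    _ = _ := by rw [hA, hB, mul_one, mul_one]

/-- The generating-function identity underlying the K-theory pushforward formula for a weighted
blowdown: in `ℤ[[t, u_1, …, u_d]]`, with
`F = ∑_{l, s : h·s ≥ l} t^l u^s`, one has
`(1−t)·(∏_i (1 − u_i t^{h_i}))·(∏_i (1 − u_i))·F = ∏_i (1 − u_i t^{h_i}) − t·∏_i (1 − u_i)`;
moreover `1 − t` and the `1 − u_i t^{h_i}` are units, so this is equivalent to
`∑_{l≥0} t^l (∏_i (1−u_i)) ∑_{s : h·s ≥ l} u^s = 1/(1−t) − (t/(1−t))·∏_i (1−u_i)/(1−u_i t^{h_i})`. -/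
theorem weighted_blowdown_generating_function
    (d : ℕ) (hd : 0 < d) (h : Fin d → ℕ) (hh : ∀ i, 0 < h i)
    (t : MvPowerSeries (Option (Fin d)) ℤ) (ht : t = MvPowerSeries.X none)
    (u : Fin d → MvPowerSeries (Option (Fin d)) ℤ) (hu : ∀ i, u i = MvPowerSeries.X (some i))
    (F : MvPowerSeries (Option (Fin d)) ℤ)
    (hF : ∀ e : Option (Fin d) →₀ ℕ,
      MvPowerSeries.coeff e F = if e none ≤ ∑ i, h i * e (some i) then 1 else 0) :
    IsUnit (1 - t) ∧ (∀ i, IsUnit (1 - u i * t ^ h i)) ∧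
    (1 - t) * (∏ i, (1 - u i * t ^ h i)) * ((∏ i, (1 - u i)) * F) =
      ∏ i, (1 - u i * t ^ h i) - t * ∏ i, (1 - u i) :=
  weighted_blowdown_generating_function_general d h t ht u hu F hF
end
end

section
/- The map ψ : (ℂ^×) × (ℂ^×)^n → (ℂ^×)^n defined by ψ(λ_0, λ)_i := λ_i·λ_0^{h_i} for i ∈ T and ψ(λ_0, λ)_i := λ_i for i ∉ T restricts to a surjective group homomorphism from G' onto G (a splitting is given by λ ↦ (1, λ)), and its kernel is exactly the subgroup {(λ, κ(λ)) : λ ∈ ℂ^×}, where κ(λ)_i := λ^{−h_i} for i ∈ T and κ(λ)_i := 1 for i ∉ T; in particular the kernel is isomorphic to ℂ^×. -/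
noncomputable section

namespace ToricBlowdown

/-- The group `G ⊆ (ℂ^×)^n` determined by the lattice points `v_i`:
`λ ∈ G` iff `∏_i λ_i^{f(v_i)} = 1` for every linear `f : ℤ^d → ℤ`. -/
def Gset {d n : ℕ} (v : Fin n → Fin d → ℤ) : Set (Fin n → ℂˣ) :=
  {lam | ∀ f : (Fin d → ℤ) →ₗ[ℤ] ℤ, ∏ i, lam i ^ f (v i) = 1}

/-- The group `G' ⊆ ℂ^× × (ℂ^×)^n` for the blown-up stacky fan, with extra ray `v'_0`:
`(λ_0, λ) ∈ G'` iff `λ_0^{f(v'_0)}·∏_i λ_i^{f(v_i)} = 1` for every linear `f : ℤ^d → ℤ`. -/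
def G'set {d n : ℕ} (v : Fin n → Fin d → ℤ) (v'0 : Fin d → ℤ) :
    Set (ℂˣ × (Fin n → ℂˣ)) :=
  {p | ∀ f : (Fin d → ℤ) →ₗ[ℤ] ℤ, p.1 ^ f v'0 * ∏ i, p.2 i ^ f (v i) = 1}

/-- The map `ψ : ℂ^× × (ℂ^×)^n → (ℂ^×)^n`, `ψ(λ_0,λ)_i = λ_i·λ_0^{h_i}` for `i ∈ T` and
`ψ(λ_0,λ)_i = λ_i` otherwise. -/
def ψmap {n : ℕ} (T : Finset (Fin n)) (h : Fin n → ℕ) (p : ℂˣ × (Fin n → ℂˣ)) :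
    Fin n → ℂˣ :=
  fun i => if i ∈ T then p.2 i * p.1 ^ h i else p.2 i

/-- `κ(λ)_i = λ^{−h_i}` for `i ∈ T` and `κ(λ)_i = 1` otherwise. -/
def κmap {n : ℕ} (T : Finset (Fin n)) (h : Fin n → ℕ) (lam : ℂˣ) : Fin n → ℂˣ :=
  fun i => if i ∈ T then (lam ^ h i)⁻¹ else 1

lemma zpow_sum' {G : Type*} [CommGroup G] (a : G) {ι : Type*} (s : Finset ι) (g : ι → ℤ) :
    a ^ (∑ i ∈ s, g i) = ∏ i ∈ s, a ^ g i := by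
  induction s using Finset.cons_induction with
  | empty => simp
  | cons i s hi ih => simp [Finset.sum_cons, Finset.prod_cons, zpow_add, ih]

lemma prod_psi {d n : ℕ} (v : Fin n → Fin d → ℤ) (T : Finset (Fin n))
    (h : Fin n → ℕ) (v'0 : Fin d → ℤ) (hv'0 : v'0 = ∑ i ∈ T, (h i : ℤ) • v i)
    (p : ℂˣ × (Fin n → ℂˣ)) (f : (Fin d → ℤ) →ₗ[ℤ] ℤ) :
    ∏ i, ψmap T h p i ^ f (v i) = p.1 ^ f v'0 * ∏ i, p.2 i ^ f (v i) := by
  have hf : f v'0 = ∑ i ∈ T, (h i : ℤ) * f (v i) := by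
    simp only [hv'0, map_sum, map_smul, smul_eq_mul]
  have key : ∀ i : Fin n, ψmap T h p i ^ f (v i)
      = (if i ∈ T then p.1 ^ ((h i : ℤ) * f (v i)) else 1) * p.2 i ^ f (v i) := by
    intro i
    by_cases hi : i ∈ T <;>
      simp [ψmap, hi, mul_zpow, mul_comm, zpow_mul, zpow_natCast]
  rw [Finset.prod_congr rfl (fun i _ => key i), Finset.prod_mul_distrib]
  congr 1
  rw [Finset.prod_ite_mem, Finset.univ_inter, hf, zpow_sum']

lemma psi_kappa_eq_one {n : ℕ} (T : Finset (Fin n)) (h : Fin n → ℕ) (lam : ℂˣ) :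
    ψmap T h (lam, κmap T h lam) = 1 := by
  funext i
  by_cases hi : i ∈ T <;> simp [ψmap, κmap, hi]

/-- `ψ` is a group homomorphism mapping `G'` onto `G` (split by `λ ↦ (1, λ)`), with kernel
`{(λ, κ(λ)) : λ ∈ ℂ^×}`, a subgroup isomorphic to `ℂ^×`. -/
theorem blowdown_group_sequence
    (d n : ℕ) (hd : 0 < d) (hn : 0 < n)
    (v : Fin n → Fin d → ℤ) (T : Finset (Fin n))
    (h : Fin n → ℕ) (hh : ∀ i ∈ T, 0 < h i)
    (v'0 : Fin d → ℤ) (hv'0 : v'0 = ∑ i ∈ T, (h i : ℤ) • v i) :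
    (∀ p q : ℂˣ × (Fin n → ℂˣ), ψmap T h (p * q) = ψmap T h p * ψmap T h q) ∧
    (∀ p ∈ G'set v v'0, ψmap T h p ∈ Gset v) ∧
    (∀ lam ∈ Gset v, ((1 : ℂˣ), lam) ∈ G'set v v'0 ∧ ψmap T h (1, lam) = lam) ∧
    (∀ lam : ℂˣ, (lam, κmap T h lam) ∈ G'set v v'0) ∧
    (∀ p ∈ G'set v v'0, (ψmap T h p = 1 ↔ ∃ lam : ℂˣ, p = (lam, κmap T h lam))) ∧
    Function.Injective (fun lam : ℂˣ => (lam, κmap T h lam)) := by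
  have hker : ∀ lam : ℂˣ, (lam, κmap T h lam) ∈ G'set v v'0 := by
    intro lam f
    have h1 := prod_psi v T h v'0 hv'0 (lam, κmap T h lam) f
    rw [psi_kappa_eq_one] at h1
    simpa using h1.symm
  refine ⟨?_, ?_, ?_, hker, ?_, ?_⟩
  · intro p q
    funext i
    by_cases hi : i ∈ T <;>
      simp [ψmap, hi, mul_pow, mul_mul_mul_comm]
  · intro p hp f
    show ∏ i, ψmap T h p i ^ f (v i) = 1
    rw [prod_psi v T h v'0 hv'0 p f]
    exact hp f
  · intro lam hl
    refine ⟨fun f => ?_, ?_⟩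
    · simpa using hl f
    · funext i
      by_cases hi : i ∈ T <;> simp [ψmap, hi]
  · intro p hp
    constructor
    · intro hψ
      refine ⟨p.1, ?_⟩
      refine Prod.ext rfl ?_
      funext i
      have := congrFun hψ i
      by_cases hi : i ∈ T <;> simp [ψmap, hi] at this <;> simp [κmap, hi, this]
      exact eq_inv_of_mul_eq_one_left this
    · rintro ⟨lam, rfl⟩
      exact psi_kappa_eq_one T h lam
  · intro a b hab
    simpa using congrArg Prod.fst hab

end ToricBlowdown
end
end

section
/- For every z' ∈ ℂ^{n'} such that {j : z'_j = 0} ∈ 𝒮', the point z ∈ ℂ^n defined by z_i := Π_{j=1}^{n'} (z'_j)^{α_{ij}} (with the convention 0^0 = 1) satisfies {i : z_i = 0} ∈ 𝒮. In other words, the monomial map ℂ^{n'} → ℂ^n determined by the matrix α maps the open set Z' associated to (v', 𝒮') into the open set Z associated to (v, 𝒮). -/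
open scoped TensorProduct

noncomputable section

namespace ToricStack

/-- The monomial map `ℂ^{n'} → ℂ^n` determined by the matrix `α` (with `0^0 = 1`) maps the open
set `Z'` associated to `(v', 𝒮')` into the open set `Z` associated to `(v, 𝒮)`: if the zero
coordinate set of `z'` belongs to `𝒮'`, then the zero coordinate set of
`z_i = ∏_j (z'_j)^{α_{ij}}` belongs to `𝒮`. -/
theorem monomial_map_preserves_open_sets
    (d n n' : ℕ) (hd : 0 < d) (hn : 0 < n) (hn' : 0 < n')
    (v : Fin n → Fin d → ℤ) (𝒮 : Finset (Finset (Fin n)))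
    (v' : Fin n' → Fin d → ℤ) (𝒮' : Finset (Finset (Fin n')))
    (hfan : IsStackyFan v 𝒮) (hfan' : IsStackyFan v' 𝒮')
    (href : ∀ S' ∈ 𝒮', ∃ S ∈ 𝒮, cone v' S' ⊆ cone v S)
    (σ : Fin n' → Finset (Fin n))
    (hσ : ∀ j, σ j ∈ 𝒮 ∧ toR (v' j) ∈ cone v (σ j) ∧
      ∀ S ∈ 𝒮, toR (v' j) ∈ cone v S → σ j ⊆ S)
    (α : Fin n → Fin n' → ℕ)
    (hα : ∀ i j, i ∉ σ j → α i j = 0)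
    (hv' : ∀ j, v' j = ∑ i, (α i j : ℤ) • v i)
    (z' : Fin n' → ℂ) (I' : Finset (Fin n')) (hI' : ∀ j, j ∈ I' ↔ z' j = 0)
    (hz' : I' ∈ 𝒮')
    (z : Fin n → ℂ) (hz : ∀ i, z i = ∏ j, (z' j) ^ (α i j))
    (I : Finset (Fin n)) (hI : ∀ i, i ∈ I ↔ z i = 0) :
    I ∈ 𝒮 := by
  obtain ⟨S, hS, hsub⟩ := href I' hz'
  apply hfan.2.2.2.1 S hS
  intro i hi
  have hzi : z i = 0 := (hI i).mp hi
  rw [hz] at hzi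
  obtain ⟨j, -, hj⟩ := Finset.prod_eq_zero_iff.mp hzi
  have hzj := pow_eq_zero_iff'.mp hj
  have hjI' : j ∈ I' := (hI' j).mpr hzj.1
  have hiσ : i ∈ σ j := by
    by_contra h
    exact hzj.2 (hα i j h)
  have hvj : toR (v' j) ∈ cone v' I' := by
    refine ⟨fun k => if k = j then 1 else 0, ?_, ?_, ?_⟩
    · intro k; dsimp only; split <;> norm_num
    · intro k hk
      have : k ≠ j := fun h => hk (h ▸ hjI')
      simp [this]
    · simp [Finset.sum_ite_eq']
  exact (hσ j).2.2 S hS (hsub hvj) hiσ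

end ToricStack
end
end
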